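/- Every resolvent of a nicely-moded query Q and a nicely-moded clause c, where the derivation step is input-consuming and Var(Q) ∩ Var(c) = ∅, is nicely-moded. -/

import Mathlib

/- ## First-order terms -/

inductive Trm (F : Type) : Type
  | var : ℕ → Trm F
  | fn : F → List (Trm F) → Trm F

/-- A substitution: a mapping from variables to terms. -/
abbrev Subst (F : Type) := ℕ → Trm F

namespace Trm
variable {F : Type}

/-- Application of a substitution to a term. -/
def subst (σ : Subst F) : Trm F → Trm F
  | .var x => σ x
  | .fn f ts => .fn f (ts.attach.map (fun t => t.1.subst σ))
decreasing_by simp_wf; have := List.sizeOf_lt_of_mem t.2; omega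

/-- The set of variables occurring in a term. -/
def vars : Trm F → Set ℕ
  | .var x => {x}
  | .fn _ ts => (ts.attach.map (fun t => t.1.vars)).foldr (· ∪ ·) ∅
decreasing_by simp_wf; have := List.sizeOf_lt_of_mem t.2; omega

/-- The number of occurrences of a variable in a term. -/
def varCount (x : ℕ) : Trm F → ℕ
  | .var y => if y = x then 1 else 0
  | .fn _ ts => (ts.attach.map (fun t => t.1.varCount x)).sum
decreasing_by simp_wf; have := List.sizeOf_lt_of_mem t.2; omega

/-- The subterm relation. -/
inductive IsSubterm : Trm F → Trm F → Prop
  | refl (t : Trm F) : IsSubterm t t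
  | fn {s t : Trm F} {f : F} {ts : List (Trm F)} : t ∈ ts → IsSubterm s t → IsSubterm s (.fn f ts)

end Trm

/- ## Sequences of terms -/

/-- Application of a substitution to a sequence of terms. -/
def substList {F : Type} (σ : Subst F) (ts : List (Trm F)) : List (Trm F) :=
  ts.map (Trm.subst σ)

/-- The set of variables occurring in a sequence of terms. -/
def varsList {F : Type} (ts : List (Trm F)) : Set ℕ := ⋃ t ∈ ts, t.vars

/-- The number of occurrences of a variable in a sequence of terms. -/
def varCountList {F : Type} (x : ℕ) (ts : List (Trm F)) : ℕ :=
  (ts.map (Trm.varCount x)).sum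

/-- A sequence of terms is linear if every variable occurs at most once in it. -/
def LinearList {F : Type} (ts : List (Trm F)) : Prop :=
  ∀ x : ℕ, varCountList x ts ≤ 1

/-- A term occurs in a sequence of terms if it is a subterm of one of its components. -/
def OccursInList {F : Type} (s : Trm F) (ts : List (Trm F)) : Prop :=
  ∃ t ∈ ts, Trm.IsSubterm s t

namespace Subst
variable {F : Type}

/-- The identity (empty) substitution. -/
def id : Subst F := Trm.var

/-- Composition of substitutions: `(comp σ τ)` applies `σ` first, then `τ`. -/
def comp (σ τ : Subst F) : Subst F := fun x => (σ x).subst τ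

/-- The domain of a substitution. -/
def dom (σ : Subst F) : Set ℕ := {x | σ x ≠ Trm.var x}

/-- A substitution has finite domain. -/
def FiniteDom (σ : Subst F) : Prop := σ.dom.Finite

/-- The set of variables of a substitution: its domain together with the
variables occurring in the images of domain variables. -/
def vars (σ : Subst F) : Set ℕ := σ.dom ∪ ⋃ x ∈ σ.dom, (σ x).vars

/-- A renaming: a substitution given by a permutation of the variables. -/
def IsRenaming (σ : Subst F) : Prop := ∃ e : ℕ ≃ ℕ, σ = fun x => Trm.var (e x)

end Subst

/-- `θ` is a unifier of the sequences of terms `z` and `w`. -/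
def IsUnifierList {F : Type} (θ : Subst F) (z w : List (Trm F)) : Prop :=
  substList θ z = substList θ w

/-- `θ` is a most general unifier (mgu) of the sequences of terms `z` and `w`. -/
def IsMguList {F : Type} (θ : Subst F) (z w : List (Trm F)) : Prop :=
  IsUnifierList θ z w ∧ ∀ σ : Subst F, IsUnifierList σ z w → ∃ γ : Subst F, Subst.comp θ γ = σ

/- ## Atoms, queries, clauses, programs (in presence of a fixed mode) -/

/-- An atom `p(s,t)`, where `s` is the sequence of terms filling in the input
positions and `t` the sequence of terms filling in the output positions
(as determined by the fixed mode of `p`). -/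
structure Atom (P F : Type) where
  rel : P
  inp : List (Trm F)
  out : List (Trm F)

namespace Atom
variable {P F : Type}

def subst (σ : Subst F) (A : Atom P F) : Atom P F :=
  ⟨A.rel, substList σ A.inp, substList σ A.out⟩

def vars (A : Atom P F) : Set ℕ := varsList A.inp ∪ varsList A.out

/-- `θ` is a unifier of two atoms. -/
def IsUnifier (θ : Subst F) (A B : Atom P F) : Prop := A.subst θ = B.subst θ

/-- `θ` is a most general unifier of two atoms. -/
def IsMgu (θ : Subst F) (A B : Atom P F) : Prop :=
  IsUnifier θ A B ∧ ∀ σ : Subst F, IsUnifier σ A B → ∃ γ : Subst F, Subst.comp θ γ = σ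

/-- An mgu of two atoms is relevant if its variables are among those of the two atoms. -/
def RelevantFor (θ : Subst F) (A B : Atom P F) : Prop :=
  Subst.vars θ ⊆ A.vars ∪ B.vars

end Atom

/-- A query: a finite sequence of atoms. -/
abbrev Query (P F : Type) := List (Atom P F)

/-- The set of variables of a query. -/
def queryVars {P F : Type} (Q : Query P F) : Set ℕ := ⋃ A ∈ Q, A.vars

/-- `In(Q)`: the sequence of terms filling in the input positions of `Q`. -/
def queryInp {P F : Type} (Q : Query P F) : List (Trm F) := Q.flatMap Atom.inp

/-- `Out(Q)`: the sequence of terms filling in the output positions of `Q`. -/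
def queryOut {P F : Type} (Q : Query P F) : List (Trm F) := Q.flatMap Atom.out

/-- A clause `H ← B`. -/
structure Clause (P F : Type) where
  head : Atom P F
  body : Query P F

namespace Clause
variable {P F : Type}

def subst (σ : Subst F) (c : Clause P F) : Clause P F :=
  ⟨c.head.subst σ, c.body.map (Atom.subst σ)⟩

def vars (c : Clause P F) : Set ℕ := c.head.vars ∪ queryVars c.body

end Clause

/-- A variant of a clause: obtained by applying a renaming. -/
def IsVariantOf {P F : Type} (c c' : Clause P F) : Prop :=
  ∃ ρ : Subst F, Subst.IsRenaming ρ ∧ c' = c.subst ρ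

/-- A program: a finite set of clauses (represented as a list). -/
abbrev Program (P F : Type) := List (Clause P F)

/- ## Nicely- and simply-moded objects -/

/-- A query `p1(s1,t1),…,pn(sn,tn)` is nicely-moded if `t1,…,tn` is a linear
sequence of terms and for all `i`, `Var(si) ∩ ⋃_{j=i}^{n} Var(tj) = ∅`. -/
def NMQuery {P F : Type} (Q : Query P F) : Prop :=
  LinearList (queryOut Q) ∧
  ∀ (i : ℕ) (h : i < Q.length),
    varsList (Q.get ⟨i, h⟩).inp ∩ varsList (queryOut (Q.drop i)) = ∅

/-- A clause `p(s0,t0) ← Q` is nicely-moded if `Q` is nicely-moded and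
`Var(s0)` is disjoint from the output variables of `Q`. -/
def NMClause {P F : Type} (c : Clause P F) : Prop :=
  NMQuery c.body ∧ varsList c.head.inp ∩ varsList (queryOut c.body) = ∅

/-- A program is nicely-moded if all its clauses are. -/
def NMProgram {P F : Type} (Pgm : Program P F) : Prop := ∀ c ∈ Pgm, NMClause c

/-- A query is simply-moded if it is nicely-moded and its sequence of output
terms is a (linear) sequence of variables. -/
def SMQuery {P F : Type} (Q : Query P F) : Prop :=
  NMQuery Q ∧ ∀ t ∈ queryOut Q, ∃ x : ℕ, t = Trm.var x

/-- A clause is simply-moded if it is nicely-moded and its body is simply-moded. -/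
def SMClause {P F : Type} (c : Clause P F) : Prop :=
  NMClause c ∧ SMQuery c.body

/-- A program is simply-moded if all its clauses are. -/
def SMProgram {P F : Type} (Pgm : Program P F) : Prop := ∀ c ∈ Pgm, SMClause c

/- ## Input-consuming derivations -/

/-- `ICStepAt Q k c θ Q'` : the query `Q'` is obtained from `Q` by an
input-consuming derivation step resolving the atom at position `k` with the
(already renamed-apart) input clause `c`, via the relevant mgu `θ`. -/
def ICStepAt {P F : Type} (Q : Query P F) (k : ℕ) (c : Clause P F) (θ : Subst F)
    (Q' : Query P F) : Prop :=
  ∃ h : k < Q.length,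
    Atom.IsMgu θ (Q.get ⟨k, h⟩) c.head ∧
    Atom.RelevantFor θ (Q.get ⟨k, h⟩) c.head ∧
    substList θ (Q.get ⟨k, h⟩).inp = (Q.get ⟨k, h⟩).inp ∧
    Q' = (Q.take k ++ c.body ++ Q.drop (k + 1)).map (Atom.subst θ)

/-- A (possibly partial, possibly infinite) input-consuming derivation of length
`len` in program `Pgm`: queries `Q i`, selected atom positions `sel i`, input
clauses `cl i` (variants of program clauses) and relevant mgus `sub i`,
satisfying standardization apart. -/
structure ICDeriv {P F : Type} (Pgm : Program P F) (len : ℕ∞) where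
  Q : ℕ → Query P F
  sel : ℕ → ℕ
  cl : ℕ → Clause P F
  sub : ℕ → Subst F
  step : ∀ i : ℕ, (i : ℕ∞) < len → ICStepAt (Q i) (sel i) (cl i) (sub i) (Q (i + 1))
  fromProg : ∀ i : ℕ, (i : ℕ∞) < len → ∃ c ∈ Pgm, IsVariantOf c (cl i)
  standApart : ∀ i : ℕ, (i : ℕ∞) < len →
    Clause.vars (cl i) ∩
      (queryVars (Q 0) ∪ ⋃ j < i, (Clause.vars (cl j) ∪ Subst.vars (sub j))) = ∅

/-- The composition `θ1 θ2 ⋯ θn` of the first `n` step substitutions. -/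
def compRange {F : Type} (θ : ℕ → Subst F) : ℕ → Subst F
  | 0 => Subst.id
  | n + 1 => Subst.comp (compRange θ n) (θ n)

/-- There exists an infinite input-consuming derivation of `Pgm ∪ {Q0}`. -/
def InfICDeriv {P F : Type} (Pgm : Program P F) (Q0 : Query P F) : Prop :=
  ∃ d : ICDeriv Pgm ⊤, d.Q 0 = Q0

/-- A program is input terminating if all its input-consuming derivations
starting in a nicely-moded query are finite. -/
def InputTerminating {P F : Type} (Pgm : Program P F) : Prop :=
  ∀ Q : Query P F, NMQuery Q → ¬ InfICDeriv Pgm Q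

/- ## Dependency between predicate symbols -/

/-- `p` is defined in `Pgm` if `p` occurs in the head of one of its clauses. -/
def DefinedIn {P F : Type} (Pgm : Program P F) (p : P) : Prop :=
  ∃ c ∈ Pgm, c.head.rel = p

/-- `p` occurs in `Pgm` (in a head or in a body). -/
def OccursInProg {P F : Type} (Pgm : Program P F) (p : P) : Prop :=
  ∃ c ∈ Pgm, c.head.rel = p ∨ ∃ B ∈ c.body, B.rel = p

/-- `Pgm` extends `R` if no relation defined in `Pgm` occurs in `R`. -/
def ProgExtends {P F : Type} (Pgm R : Program P F) : Prop :=
  ∀ p : P, DefinedIn Pgm p → ¬ OccursInProg R p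

/-- `p` refers to `q` in `Pgm`. -/
def RefersTo {P F : Type} (Pgm : Program P F) (p q : P) : Prop :=
  ∃ c ∈ Pgm, c.head.rel = p ∧ ∃ B ∈ c.body, B.rel = q

/-- `p ⊒ q` : `p` depends on `q` (reflexive-transitive closure of refers-to). -/
def ProgDependsOn {P F : Type} (Pgm : Program P F) : P → P → Prop :=
  Relation.ReflTransGen (RefersTo Pgm)

/-- `p ≃ q` : `p` and `q` are mutually dependent. -/
def MutDep {P F : Type} (Pgm : Program P F) (p q : P) : Prop :=
  ProgDependsOn Pgm p q ∧ ProgDependsOn Pgm q p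

/-- `p ⊐ q` : `p ⊒ q` and not `p ≃ q`. -/
def SqSupset {P F : Type} (Pgm : Program P F) (p q : P) : Prop :=
  ProgDependsOn Pgm p q ∧ ¬ MutDep Pgm p q

/- ## Moded level mappings and quasi recurrency -/

/-- A moded level mapping: a function from atoms to naturals which does not
depend on the output terms (and is invariant under renaming, as it is a
function on the extended Herbrand base). -/
def ModedLevelMapping {P F : Type} (lvl : Atom P F → ℕ) : Prop :=
  (∀ (p : P) (s t u : List (Trm F)), lvl ⟨p, s, t⟩ = lvl ⟨p, s, u⟩) ∧
  (∀ (A : Atom P F) (ρ : Subst F), Subst.IsRenaming ρ → lvl (A.subst ρ) = lvl A)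

/-- A clause is quasi recurrent wrt `lvl` (in program `Pgm`) if for every
instance `H ← A,B,C` of it, if `Rel(H) ≃ Rel(B)` then `|H| > |B|`. -/
def QRClause {P F : Type} (Pgm : Program P F) (lvl : Atom P F → ℕ) (c : Clause P F) : Prop :=
  ∀ θ : Subst F, ∀ B ∈ c.body, MutDep Pgm c.head.rel B.rel →
    lvl (B.subst θ) < lvl (c.head.subst θ)

/-- A program is quasi recurrent wrt `lvl` if all its clauses are. -/
def QuasiRecurrentWrt {P F : Type} (Pgm : Program P F) (lvl : Atom P F → ℕ) : Prop :=
  ∀ c ∈ Pgm, QRClause Pgm lvl c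

/-- A program is quasi recurrent if it is quasi recurrent wrt some moded level mapping. -/
def QuasiRecurrent {P F : Type} (Pgm : Program P F) : Prop :=
  ∃ lvl : Atom P F → ℕ, ModedLevelMapping lvl ∧ QuasiRecurrentWrt Pgm lvl
/- ## IC-trees -/

/-- `Q'` is a resolvent of `Q` and (a renamed-apart variant of) the clause `c`
with respect to the atom at position `k`, via an input-consuming step. -/
def ICResolventOf {P F : Type} (Q : Query P F) (k : ℕ) (c : Clause P F)
    (Q' : Query P F) : Prop :=
  ∃ (c' : Clause P F) (θ : Subst F),
    IsVariantOf c c' ∧ Clause.vars c' ∩ queryVars Q = ∅ ∧ ICStepAt Q k c' θ Q'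

/-- The atom at position `k` of `Q` is input-consuming resolvable wrt clause `c`. -/
def ICResolvable {P F : Type} (Q : Query P F) (k : ℕ) (c : Clause P F) : Prop :=
  ∃ Q' : Query P F, ICResolventOf Q k c Q'

/-- An IC-tree for `Pgm ∪ {Q0}`, represented by the set `T` of its paths from
the root (a node of the tree is identified with the path reaching it):
its branches are input-consuming derivations of `Pgm ∪ {Q0}`, and every node
has exactly one descendant for every atom of its query and every program
clause wrt which that atom is input-consuming resolvable, this descendant
being a resolvent. -/
structure IsICTree {P F : Type} (Pgm : Program P F) (Q0 : Query P F)
    (T : Set (List (Query P F))) : Prop where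
  root : [Q0] ∈ T
  starts : ∀ l ∈ T, ∃ l' : List (Query P F), l = Q0 :: l'
  prefixClosed : ∀ (l : List (Query P F)) (Qn : Query P F), l ++ [Qn] ∈ T → l ≠ [] → l ∈ T
  children : ∀ l ∈ T, ∀ (k : ℕ) (c : Clause P F), c ∈ Pgm →
    ICResolvable (l.getLastD []) k c →
    ∃! Q' : Query P F, l ++ [Q'] ∈ T ∧ ICResolventOf (l.getLastD []) k c Q'
  childrenOnly : ∀ (l : List (Query P F)) (Q' : Query P F), l ++ [Q'] ∈ T → l ≠ [] →
    ∃ (k : ℕ) (c : Clause P F), c ∈ Pgm ∧ ICResolventOf (l.getLastD []) k c Q'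
  branches : ∀ l ∈ T, ∃ d : ICDeriv Pgm ((l.length - 1 : ℕ) : ℕ∞),
    ∀ i < l.length, d.Q i = l.getD i []

/- ## Input-recursive programs -/

/-- A clause `H ← A,B,C` is input-recursive (in `Pgm`) if whenever
`Rel(H) ≃ Rel(B)` then `Var(In(B)) ⊆ Var(In(H))`. -/
def InputRecursiveClause {P F : Type} (Pgm : Program P F) (c : Clause P F) : Prop :=
  ∀ B ∈ c.body, MutDep Pgm c.head.rel B.rel → varsList B.inp ⊆ varsList c.head.inp

/-- A program is input-recursive if all its clauses are. -/
def InputRecursive {P F : Type} (Pgm : Program P F) : Prop :=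
  ∀ c ∈ Pgm, InputRecursiveClause Pgm c

/- ## Auxiliary development -/

namespace Trm
variable {F : Type}

@[simp] theorem subst_var (σ : Subst F) (x : ℕ) : (Trm.var x).subst σ = σ x := by
  rw [Trm.subst]

@[simp] theorem subst_fn (σ : Subst F) (f : F) (ts : List (Trm F)) :
    (Trm.fn f ts).subst σ = Trm.fn f (ts.map (Trm.subst σ)) := by
  rw [Trm.subst]
  congr 1
  simp [List.attach_map_val]

theorem foldr_union_eq (l : List (Set ℕ)) : l.foldr (· ∪ ·) ∅ = ⋃ s ∈ l, s := by
  induction l with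
  | nil => simp
  | cons a l ih => simp [List.foldr_cons, ih]

@[simp] theorem vars_var (x : ℕ) : (Trm.var x : Trm F).vars = {x} := by rw [Trm.vars]

@[simp] theorem vars_fn (f : F) (ts : List (Trm F)) :
    (Trm.fn f ts).vars = ⋃ t ∈ ts, t.vars := by
  rw [Trm.vars, foldr_union_eq]
  ext x
  simp [List.attach_map_val]

@[simp] theorem varCount_var (x y : ℕ) :
    (Trm.var y : Trm F).varCount x = if y = x then 1 else 0 := by rw [Trm.varCount]

@[simp] theorem varCount_fn (x : ℕ) (f : F) (ts : List (Trm F)) :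
    (Trm.fn f ts).varCount x = (ts.map (Trm.varCount x)).sum := by
  rw [Trm.varCount]
  congr 1
  simp [List.attach_map_val]

/-- Induction principle for terms. -/
def indOn {motive : Trm F → Prop} (hv : ∀ x, motive (.var x))
    (hf : ∀ f ts, (∀ t ∈ ts, motive t) → motive (.fn f ts)) : ∀ t, motive t
  | .var x => hv x
  | .fn f ts => hf f ts (fun t ht => indOn hv hf t)
termination_by t => sizeOf t
decreasing_by have := List.sizeOf_lt_of_mem ht; simp; omega

theorem subst_subst (σ τ : Subst F) (t : Trm F) :
    (t.subst σ).subst τ = t.subst (Subst.comp σ τ) := by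
  induction t using indOn with
  | hv x => simp [Subst.comp]
  | hf f ts ih => simp only [subst_fn, List.map_map]
                  congr 1
                  exact List.map_congr_left (fun t ht => ih t ht)

theorem vars_subst (σ : Subst F) (t : Trm F) :
    (t.subst σ).vars = ⋃ x ∈ t.vars, (σ x).vars := by
  induction t using indOn with
  | hv x => simp
  | hf f ts ih =>
    simp only [subst_fn, vars_fn, List.mem_map]
    ext y
    constructor
    · rintro hy
      simp only [Set.mem_iUnion] at hy ⊢
      obtain ⟨t', ⟨t, ht, rfl⟩, hy⟩ := hy
      rw [ih t ht] at hy
      simp only [Set.mem_iUnion] at hy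
      obtain ⟨x, hx, hy⟩ := hy
      exact ⟨x, ⟨t, ht, hx⟩, hy⟩
    · rintro hy
      simp only [Set.mem_iUnion] at hy ⊢
      obtain ⟨x, ⟨t, ht, hx⟩, hy⟩ := hy
      refine ⟨t.subst σ, ⟨t, ht, rfl⟩, ?_⟩
      rw [ih t ht]
      simp only [Set.mem_iUnion]
      exact ⟨x, hx, hy⟩

theorem mem_vars_iff_varCount (x : ℕ) (t : Trm F) : x ∈ t.vars ↔ t.varCount x ≠ 0 := by
  induction t using indOn with
  | hv y =>
    simp only [vars_var, Set.mem_singleton_iff, varCount_var]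
    rcases eq_or_ne y x with rfl | h
    · simp
    · simp [h, Ne.symm h]
  | hf f ts ih =>
    simp only [vars_fn, varCount_fn, Set.mem_iUnion, ne_eq, List.sum_eq_zero_iff, List.mem_map]
    constructor
    · rintro ⟨t, ht, hx⟩ h
      exact ((ih t ht).mp hx) (h _ ⟨t, ht, rfl⟩)
    · intro h
      by_contra hc
      push_neg at hc
      apply h
      rintro n ⟨t, ht, rfl⟩
      by_contra hn
      exact absurd ((ih t ht).mpr hn) (by simpa using hc t ht)

theorem subst_congr {σ τ : Subst F} {t : Trm F} (h : ∀ x ∈ t.vars, σ x = τ x) :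
    t.subst σ = t.subst τ := by
  induction t using indOn with
  | hv x => simpa using h x (by simp)
  | hf f ts ih =>
    simp only [subst_fn]
    congr 1
    refine List.map_congr_left (fun t ht => ih t ht (fun x hx => h x ?_))
    simp only [vars_fn, Set.mem_iUnion]
    exact ⟨t, ht, hx⟩

theorem map_eq_self_forall {α : Type*} {l : List α} {f : α → α} (h : l.map f = l) :
    ∀ a ∈ l, f a = a := by
  induction l with
  | nil => simp
  | cons a l ih =>
    simp only [List.map_cons, List.cons.injEq] at h
    intro b hb
    rcases List.mem_cons.mp hb with rfl | hb
    · exact h.1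
    · exact ih h.2 b hb

theorem subst_eq_self {σ : Subst F} {t : Trm F} (h : t.subst σ = t) :
    ∀ x ∈ t.vars, σ x = Trm.var x := by
  induction t using indOn with
  | hv x => intro y hy; simp at hy h; subst hy; simpa using h
  | hf f ts ih =>
    simp only [subst_fn, Trm.fn.injEq] at h
    intro x hx
    simp only [vars_fn, Set.mem_iUnion] at hx
    obtain ⟨t, ht, hx⟩ := hx
    exact ih t ht (map_eq_self_forall h.2 t ht) x hx

theorem pointwise_of_subst_subst_eq {θ σ : Subst F} {t : Trm F}
    (h : (t.subst θ).subst σ = t.subst σ) :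
    ∀ z ∈ t.vars, (θ z).subst σ = σ z := by
  induction t using indOn with
  | hv x => intro z hz; simp at hz; subst hz; simpa using h
  | hf f ts ih =>
    simp only [subst_fn, List.map_map, Trm.fn.injEq] at h
    intro z hz
    simp only [vars_fn, Set.mem_iUnion] at hz
    obtain ⟨t, ht, hz⟩ := hz
    have := List.map_inj_left.mp h.2 t ht
    exact ih t ht this z hz

end Trm

section ListLemmas
variable {F : Type}

theorem Trm.subst_id (t : Trm F) : t.subst Subst.id = t := by
  induction t using Trm.indOn with
  | hv x => simp [Subst.id]
  | hf f ts ih =>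
    simp only [Trm.subst_fn]
    conv_rhs => rw [← List.map_id ts]
    exact congrArg _ (List.map_congr_left (fun t ht => ih t ht))

@[simp] theorem varsList_nil : varsList ([] : List (Trm F)) = ∅ := by simp [varsList]

@[simp] theorem varsList_cons (t : Trm F) (ts : List (Trm F)) :
    varsList (t :: ts) = t.vars ∪ varsList ts := by
  simp [varsList]

@[simp] theorem varsList_append (ts us : List (Trm F)) :
    varsList (ts ++ us) = varsList ts ∪ varsList us := by
  simp [varsList]
  ext x
  simp only [Set.mem_union, Set.mem_iUnion]
  constructor
  · rintro ⟨t, (h | h), hx⟩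
    · exact Or.inl ⟨t, h, hx⟩
    · exact Or.inr ⟨t, h, hx⟩
  · rintro (⟨t, h, hx⟩ | ⟨t, h, hx⟩)
    · exact ⟨t, Or.inl h, hx⟩
    · exact ⟨t, Or.inr h, hx⟩

theorem mem_varsList {ts : List (Trm F)} {x : ℕ} :
    x ∈ varsList ts ↔ ∃ t ∈ ts, x ∈ t.vars := by simp [varsList]

@[simp] theorem substList_nil (σ : Subst F) : substList σ [] = [] := rfl

@[simp] theorem substList_cons (σ : Subst F) (t : Trm F) (ts : List (Trm F)) :
    substList σ (t :: ts) = t.subst σ :: substList σ ts := rfl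

@[simp] theorem substList_append (σ : Subst F) (ts us : List (Trm F)) :
    substList σ (ts ++ us) = substList σ ts ++ substList σ us := by simp [substList]

theorem substList_id (ts : List (Trm F)) : substList Subst.id ts = ts := by
  simp only [substList]
  conv_rhs => rw [← List.map_id ts]
  exact List.map_congr_left (fun t _ => Trm.subst_id t)

theorem varsList_substList (σ : Subst F) (ts : List (Trm F)) :
    varsList (substList σ ts) = ⋃ x ∈ varsList ts, (σ x).vars := by
  ext y
  simp only [mem_varsList, substList, List.mem_map, varsList, Set.mem_iUnion]
  constructor
  · rintro ⟨t', ⟨t, ht, rfl⟩, hy⟩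
    rw [Trm.vars_subst] at hy
    simp only [Set.mem_iUnion] at hy
    obtain ⟨x, hx, hy⟩ := hy
    exact ⟨x, ⟨t, ht, hx⟩, hy⟩
  · rintro ⟨x, ⟨t, ht, hx⟩, hy⟩
    refine ⟨t.subst σ, ⟨t, ht, rfl⟩, ?_⟩
    rw [Trm.vars_subst]
    simp only [Set.mem_iUnion]
    exact ⟨x, hx, hy⟩

theorem substList_congr {σ τ : Subst F} {ts : List (Trm F)}
    (h : ∀ x ∈ varsList ts, σ x = τ x) : substList σ ts = substList τ ts :=
  List.map_congr_left (fun t ht => Trm.subst_congr (fun x hx => h x (mem_varsList.mpr ⟨t, ht, hx⟩)))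

theorem substList_eq_self {σ : Subst F} {ts : List (Trm F)} (h : substList σ ts = ts) :
    ∀ x ∈ varsList ts, σ x = Trm.var x := by
  intro x hx
  obtain ⟨t, ht, hx⟩ := mem_varsList.mp hx
  exact Trm.subst_eq_self (Trm.map_eq_self_forall h t ht) x hx

@[simp] theorem varCountList_nil (x : ℕ) : varCountList x ([] : List (Trm F)) = 0 := rfl

@[simp] theorem varCountList_cons (x : ℕ) (t : Trm F) (ts : List (Trm F)) :
    varCountList x (t :: ts) = t.varCount x + varCountList x ts := by simp [varCountList]

@[simp] theorem varCountList_append (x : ℕ) (ts us : List (Trm F)) :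
    varCountList x (ts ++ us) = varCountList x ts + varCountList x us := by
  simp [varCountList]

theorem mem_varsList_iff_varCountList {x : ℕ} {ts : List (Trm F)} :
    x ∈ varsList ts ↔ varCountList x ts ≠ 0 := by
  induction ts with
  | nil => simp
  | cons t ts ih => simp [Trm.mem_vars_iff_varCount, ih]; omega

theorem LinearList.of_append_left {ts us : List (Trm F)} (h : LinearList (ts ++ us)) :
    LinearList ts := by
  intro x
  have := h x
  simp only [varCountList_append] at this
  omega

theorem LinearList.of_append_right {ts us : List (Trm F)} (h : LinearList (ts ++ us)) :
    LinearList us := by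
  intro x
  have := h x
  simp only [varCountList_append] at this
  omega

theorem LinearList.disjoint_of_append {ts us : List (Trm F)} (h : LinearList (ts ++ us)) :
    varsList ts ∩ varsList us = ∅ := by
  ext x
  simp only [Set.mem_inter_iff, Set.mem_empty_iff_false, iff_false, not_and]
  intro h1 h2
  have := h x
  rw [mem_varsList_iff_varCountList] at h1 h2
  simp only [varCountList_append] at this
  omega

end ListLemmas

section QueryLemmas
variable {P F : Type}

@[simp] theorem queryOut_nil : queryOut ([] : Query P F) = [] := rfl

@[simp] theorem queryOut_cons (a : Atom P F) (Q : Query P F) :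
    queryOut (a :: Q) = a.out ++ queryOut Q := rfl

@[simp] theorem queryOut_append (Q R : Query P F) :
    queryOut (Q ++ R) = queryOut Q ++ queryOut R := by simp [queryOut]

@[simp] theorem Atom.inp_subst (ψ : Subst F) (a : Atom P F) :
    (a.subst ψ).inp = substList ψ a.inp := rfl

@[simp] theorem Atom.out_subst (ψ : Subst F) (a : Atom P F) :
    (a.subst ψ).out = substList ψ a.out := rfl

theorem queryOut_map_subst (ψ : Subst F) (Q : Query P F) :
    queryOut (Q.map (Atom.subst ψ)) = substList ψ (queryOut Q) := by
  induction Q with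
  | nil => rfl
  | cons a Q ih => simp [ih]

theorem mem_queryVars {Q : Query P F} {x : ℕ} :
    x ∈ queryVars Q ↔ ∃ a ∈ Q, x ∈ a.vars := by simp [queryVars]

theorem varsList_inp_subset_queryVars {Q : Query P F} {a : Atom P F} (ha : a ∈ Q) :
    varsList a.inp ⊆ queryVars Q :=
  fun x hx => mem_queryVars.mpr ⟨a, ha, Or.inl hx⟩

theorem varsList_out_subset_queryVars {Q : Query P F} {a : Atom P F} (ha : a ∈ Q) :
    varsList a.out ⊆ queryVars Q :=
  fun x hx => mem_queryVars.mpr ⟨a, ha, Or.inr hx⟩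

theorem varsList_queryOut_subset_queryVars {Q : Query P F} :
    varsList (queryOut Q) ⊆ queryVars Q := by
  intro x hx
  induction Q with
  | nil => simpa using hx
  | cons a Q ih =>
    simp only [queryOut_cons, varsList_append, Set.mem_union] at hx
    rcases hx with hx | hx
    · exact mem_queryVars.mpr ⟨a, by simp, Or.inr hx⟩
    · obtain ⟨b, hb, h⟩ := mem_queryVars.mp (ih hx)
      exact mem_queryVars.mpr ⟨b, by simp [hb], h⟩

/-- Extraction form of nicely-modedness. -/
theorem NMQuery.split {Q : Query P F} (h : NMQuery Q) {X : Query P F} {a : Atom P F}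
    {Y : Query P F} (hs : Q = X ++ a :: Y) :
    varsList a.inp ∩ varsList (queryOut (a :: Y)) = ∅ := by
  have hlen : X.length < Q.length := by subst hs; simp
  have hdrop : Q.drop X.length = a :: Y := by subst hs; exact List.drop_left
  have hget : Q.get ⟨X.length, hlen⟩ = a := by
    have h2 := List.drop_eq_getElem_cons hlen
    rw [hdrop] at h2
    injection h2 with h3 _
    rw [List.get_eq_getElem]
    exact h3.symm
  have := h.2 X.length hlen
  rwa [hget, hdrop] at this

/-- Construction form of nicely-modedness. -/
theorem NMQuery.of_split {Q : Query P F} (hlin : LinearList (queryOut Q))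
    (h : ∀ (X : Query P F) (a : Atom P F) (Y : Query P F), Q = X ++ a :: Y →
      varsList a.inp ∩ varsList (queryOut (a :: Y)) = ∅) : NMQuery Q := by
  refine ⟨hlin, fun i hi => ?_⟩
  have hdrop : Q.drop i = Q.get ⟨i, hi⟩ :: Q.drop (i + 1) := by
    simpa [List.get_eq_getElem] using List.drop_eq_getElem_cons hi
  have hsplit : Q = Q.take i ++ Q.get ⟨i, hi⟩ :: Q.drop (i + 1) := by
    rw [← hdrop, List.take_append_drop]
  rw [hdrop]
  exact h _ _ _ hsplit

end QueryLemmas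

section CountLemmas
variable {F : Type}

theorem elem_le_sum {l : List ℕ} {a : ℕ} (h : a ∈ l) : a ≤ l.sum := by
  induction l with
  | nil => simp at h
  | cons b l ih =>
    rcases List.mem_cons.mp h with rfl | h
    · simp
    · have := ih h; simp; omega

theorem varCount_le_varCountList {v : ℕ} {L : List (Trm F)} {t : Trm F} (h : t ∈ L) :
    t.varCount v ≤ varCountList v L :=
  elem_le_sum (List.mem_map.mpr ⟨t, h, rfl⟩)

theorem varCountList_substList (ψ : Subst F) (L : List (Trm F)) (v : ℕ) :
    varCountList v (substList ψ L) = (L.map (fun t => (t.subst ψ).varCount v)).sum := by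
  simp [varCountList, substList, List.map_map, Function.comp_def]

theorem mem_vars_subst {ψ : Subst F} {t : Trm F} {v : ℕ} :
    v ∈ (t.subst ψ).vars ↔ ∃ z ∈ t.vars, v ∈ (ψ z).vars := by
  rw [Trm.vars_subst]; simp

theorem mem_varsList_substList {ψ : Subst F} {L : List (Trm F)} {v : ℕ} :
    v ∈ varsList (substList ψ L) ↔ ∃ z ∈ varsList L, v ∈ (ψ z).vars := by
  rw [varsList_substList]; simp

/-- K1 : counting under a variable-valued substitution. -/
theorem varCount_subst_varmap {δ : Subst F} {t : Trm F} {v y : ℕ}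
    (hv : ∀ x ∈ t.vars, ∃ w, δ x = Trm.var w)
    (hy : δ y = Trm.var v)
    (huniq : ∀ x ∈ t.vars, δ x = Trm.var v → x = y) :
    (t.subst δ).varCount v = t.varCount y := by
  induction t using Trm.indOn with
  | hv x =>
    obtain ⟨w, hw⟩ := hv x (by simp)
    simp only [Trm.subst_var, hw, Trm.varCount_var]
    rcases eq_or_ne x y with rfl | hxy
    · rw [hw] at hy; injection hy with h; simp [h]
    · have : w ≠ v := fun h => hxy (huniq x (by simp) (by rw [hw, h]))
      simp [this, hxy]
  | hf f ts ih =>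
    simp only [Trm.subst_fn, Trm.varCount_fn, List.map_map]
    congr 1
    refine List.map_congr_left (fun u hu => ?_)
    exact ih u hu (fun x hx => hv x (by simp only [Trm.vars_fn, Set.mem_iUnion]; exact ⟨u, hu, hx⟩))
      (fun x hx h => huniq x (by simp only [Trm.vars_fn, Set.mem_iUnion]; exact ⟨u, hu, hx⟩) h)

/-- K2 : zero-count under a variable-valued substitution. -/
theorem varCount_subst_varmap_zero {δ : Subst F} {t : Trm F} {v : ℕ}
    (hv : ∀ x ∈ t.vars, ∃ w, δ x = Trm.var w)
    (hnone : ∀ x ∈ t.vars, δ x ≠ Trm.var v) :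
    (t.subst δ).varCount v = 0 := by
  induction t using Trm.indOn with
  | hv x =>
    obtain ⟨w, hw⟩ := hv x (by simp)
    have : w ≠ v := fun h => hnone x (by simp) (by rw [hw, h])
    simp [hw, this]
  | hf f ts ih =>
    simp only [Trm.subst_fn, Trm.varCount_fn, List.map_map, List.sum_eq_zero_iff]
    intro n hn
    obtain ⟨u, hu, rfl⟩ := List.mem_map.mp hn
    exact ih u hu (fun x hx => hv x (by simp only [Trm.vars_fn, Set.mem_iUnion]; exact ⟨u, hu, hx⟩))
      (fun x hx => hnone x (by simp only [Trm.vars_fn, Set.mem_iUnion]; exact ⟨u, hu, hx⟩))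

theorem varCountList_subst_varmap {δ : Subst F} {L : List (Trm F)} {v y : ℕ}
    (hv : ∀ x ∈ varsList L, ∃ w, δ x = Trm.var w)
    (hy : δ y = Trm.var v)
    (huniq : ∀ x ∈ varsList L, δ x = Trm.var v → x = y) :
    varCountList v (substList δ L) = varCountList y L := by
  induction L with
  | nil => simp
  | cons t L ih =>
    simp only [substList_cons, varCountList_cons, varsList_cons, Set.mem_union] at *
    rw [varCount_subst_varmap (fun x hx => hv x (Or.inl hx)) hy
          (fun x hx => huniq x (Or.inl hx)),
        ih (fun x hx => hv x (Or.inr hx)) (fun x hx => huniq x (Or.inr hx))]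

theorem varCountList_subst_varmap_zero {δ : Subst F} {L : List (Trm F)} {v : ℕ}
    (hv : ∀ x ∈ varsList L, ∃ w, δ x = Trm.var w)
    (hnone : ∀ x ∈ varsList L, δ x ≠ Trm.var v) :
    varCountList v (substList δ L) = 0 := by
  induction L with
  | nil => simp
  | cons t L ih =>
    simp only [substList_cons, varCountList_cons, varsList_cons, Set.mem_union] at *
    rw [varCount_subst_varmap_zero (fun x hx => hv x (Or.inl hx)) (fun x hx => hnone x (Or.inl hx)),
        ih (fun x hx => hv x (Or.inr hx)) (fun x hx => hnone x (Or.inr hx))]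

/-- Transport of linearity along an injective variable-valued substitution. -/
theorem LinearList.subst_varmap {δ : Subst F} {L : List (Trm F)} {V : Set ℕ}
    (hL : LinearList L) (hsub : varsList L ⊆ V)
    (hv : ∀ x ∈ V, ∃ w, δ x = Trm.var w)
    (hinj : ∀ x ∈ V, ∀ x' ∈ V, δ x = δ x' → x = x') :
    LinearList (substList δ L) := by
  intro v
  by_cases hex : ∃ y ∈ varsList L, δ y = Trm.var v
  · obtain ⟨y, hyL, hy⟩ := hex
    rw [varCountList_subst_varmap (fun x hx => hv x (hsub hx)) hy
      (fun x hx h => hinj x (hsub hx) y (hsub hyL) (h.trans hy.symm))]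
    exact hL y
  · push_neg at hex
    rw [varCountList_subst_varmap_zero (fun x hx => hv x (hsub hx)) hex]
    omega

/-- Transport of var-disjointness along an injective variable-valued substitution. -/
theorem disjoint_subst_varmap {δ : Subst F} {X Y : List (Trm F)} {V : Set ℕ}
    (hXY : varsList X ∩ varsList Y = ∅)
    (hX : varsList X ⊆ V) (hY : varsList Y ⊆ V)
    (hv : ∀ x ∈ V, ∃ w, δ x = Trm.var w)
    (hinj : ∀ x ∈ V, ∀ x' ∈ V, δ x = δ x' → x = x') :
    varsList (substList δ X) ∩ varsList (substList δ Y) = ∅ := by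
  ext v
  simp only [Set.mem_inter_iff, Set.mem_empty_iff_false, iff_false, not_and]
  intro h1 h2
  obtain ⟨z, hz, hv1⟩ := mem_varsList_substList.mp h1
  obtain ⟨z', hz', hv2⟩ := mem_varsList_substList.mp h2
  obtain ⟨w, hw⟩ := hv z (hX hz)
  obtain ⟨w', hw'⟩ := hv z' (hY hz')
  rw [hw] at hv1; rw [hw'] at hv2
  simp only [Trm.vars_var, Set.mem_singleton_iff] at hv1 hv2
  subst hv1; subst hv2
  have : z = z' := hinj z (hX hz) z' (hY hz') (by rw [hw, hw'])
  subst this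
  have : z ∈ varsList X ∩ varsList Y := ⟨hz, hz'⟩
  rw [hXY] at this
  exact this

/-- Joint linearity of images: auxiliary list lemma. -/
theorem sum_count_le_one {ψ : Subst F} {us : List (Trm F)}
    (hIH : ∀ u ∈ us, ∀ v, (u.subst ψ).varCount v ≤ 1)
    (hjl : ∀ v, varCountList v us ≤ 1)
    (hd : ∀ z ∈ varsList us, ∀ z' ∈ varsList us, z ≠ z' → (ψ z).vars ∩ (ψ z').vars = ∅)
    (v : ℕ) : varCountList v (substList ψ us) ≤ 1 := by
  induction us with
  | nil => simp
  | cons u us ih =>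
    simp only [substList_cons, varCountList_cons]
    rcases Nat.eq_zero_or_pos ((u.subst ψ).varCount v) with h1 | h1
    · rw [h1]
      simp only [Nat.zero_add]
      exact ih (fun u' hu' => hIH u' (by simp [hu'])) (fun w => by have := hjl w; simp at this; omega)
        (fun z hz z' hz' hne => hd z (by simp [hz]) z' (by simp [hz']) hne)
    rcases Nat.eq_zero_or_pos (varCountList v (substList ψ us)) with h2 | h2
    · rw [h2]
      have := hIH u (by simp) v
      omega
    exfalso
    have hv1 : v ∈ (u.subst ψ).vars := by rw [Trm.mem_vars_iff_varCount]; omega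
    have hv2 : v ∈ varsList (substList ψ us) := by rw [mem_varsList_iff_varCountList]; omega
    obtain ⟨z, hz, hvz⟩ := mem_vars_subst.mp hv1
    obtain ⟨z', hz', hvz'⟩ := mem_varsList_substList.mp hv2
    have hne : z ≠ z' := by
      rintro rfl
      have := hjl z
      have c1 : u.varCount z ≠ 0 := (Trm.mem_vars_iff_varCount z u).mp hz
      have c2 : varCountList z us ≠ 0 := mem_varsList_iff_varCountList.mp hz'
      simp only [varCountList_cons] at this
      omega
    have : v ∈ (ψ z).vars ∩ (ψ z').vars := ⟨hvz, hvz'⟩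
    rw [hd z (by simp [Trm.mem_vars_iff_varCount] at hz ⊢; left; exact hz) z'
      (by simp [hz']) hne] at this
    exact this

/-- K5 : a substitution with linear, pairwise var-disjoint images preserves linearity (term). -/
theorem Trm.linear_subst {ψ : Subst F} {t : Trm F}
    (hlin : ∀ v, t.varCount v ≤ 1)
    (himg : ∀ z ∈ t.vars, ∀ v, (ψ z).varCount v ≤ 1)
    (hdisj : ∀ z ∈ t.vars, ∀ z' ∈ t.vars, z ≠ z' → (ψ z).vars ∩ (ψ z').vars = ∅) :
    ∀ v, (t.subst ψ).varCount v ≤ 1 := by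
  induction t using Trm.indOn with
  | hv x => intro v; simpa using himg x (by simp) v
  | hf f ts ih =>
    intro v
    have : (Trm.fn f ts).subst ψ = Trm.fn f (substList ψ ts) := by simp [substList]
    rw [this, Trm.varCount_fn]
    have hcnt : ((substList ψ ts).map (Trm.varCount v)).sum = varCountList v (substList ψ ts) := rfl
    rw [hcnt]
    have hvars : ∀ z, z ∈ varsList ts ↔ z ∈ (Trm.fn f ts).vars := by
      intro z; rw [Trm.vars_fn]; simp [mem_varsList]
    refine sum_count_le_one ?_ ?_ ?_ v
    · intro u hu w
      refine ih u hu (fun v' => ?_) (fun z hz v' => himg z ?_ v')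
        (fun z hz z' hz' hne => hdisj z ?_ z' ?_ hne) w
      · have h1 := hlin v'
        have : u.varCount v' ≤ varCountList v' ts := varCount_le_varCountList hu
        simp only [Trm.varCount_fn] at h1
        have : varCountList v' ts = (ts.map (Trm.varCount v')).sum := rfl
        omega
      · rw [← hvars]; exact mem_varsList.mpr ⟨u, hu, hz⟩
      · rw [← hvars]; exact mem_varsList.mpr ⟨u, hu, hz⟩
      · rw [← hvars]; exact mem_varsList.mpr ⟨u, hu, hz'⟩
    · intro w
      have := hlin w
      simp only [Trm.varCount_fn] at this
      exact this
    · intro z hz z' hz' hne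
      exact hdisj z ((hvars z).mp hz) z' ((hvars z').mp hz') hne

/-- K4 : list version of K5. -/
theorem LinearList.subst {ψ : Subst F} {L : List (Trm F)}
    (hL : LinearList L)
    (himg : ∀ z ∈ varsList L, ∀ v, (ψ z).varCount v ≤ 1)
    (hdisj : ∀ z ∈ varsList L, ∀ z' ∈ varsList L, z ≠ z' → (ψ z).vars ∩ (ψ z').vars = ∅) :
    LinearList (substList ψ L) := by
  intro v
  refine sum_count_le_one ?_ hL hdisj v
  intro u hu w
  refine Trm.linear_subst (fun v' => le_trans (varCount_le_varCountList hu) (hL v'))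
    (fun z hz v' => himg z (mem_varsList.mpr ⟨u, hu, hz⟩) v')
    (fun z hz z' hz' hne => hdisj z (mem_varsList.mpr ⟨u, hu, hz⟩) z'
      (mem_varsList.mpr ⟨u, hu, hz'⟩) hne) w

end CountLemmas

section Solve
variable {F : Type}

/-- The substitution binding `z` to `a`. -/
def single (z : ℕ) (a : Trm F) : Subst F := fun v => if v = z then a else Trm.var v

theorem sizeOf_lt_fn (f : F) (as : List (Trm F)) :
    ((as.map (fun t => sizeOf t)).sum) < sizeOf (Trm.fn f as) := by
  have h : ∀ (l : List (Trm F)), ((l.map (fun t => sizeOf t)).sum) < sizeOf l := by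
    intro l
    induction l with
    | nil => simp
    | cons t l ih => simp only [List.map_cons, List.sum_cons, List.cons.sizeOf_spec]; omega
  have := h as
  simp only [Trm.fn.sizeOf_spec]
  omega

open Classical in
/-- Unification procedure for a system of pairs whose left components are jointly
linear and variable-disjoint from the right components. -/
noncomputable def solve : List (Trm F × Trm F) → Subst F
  | [] => Subst.id
  | (Trm.var y, b) :: rest =>
      Subst.comp (single y b) (solve rest)
  | (Trm.fn f as, Trm.var z) :: rest =>
      Subst.comp (single z (Trm.fn f as))
        (solve ((id rest).map (fun p => (p.1, p.2.subst (single z (Trm.fn f as))))))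
  | (Trm.fn f as, Trm.fn g bs) :: rest =>
      if f = g ∧ as.length = bs.length then solve (as.zip bs ++ rest) else Subst.id
termination_by l => ((l.map (fun p => sizeOf p.1)).sum, l.length)
decreasing_by
  · simp only [List.map_cons, List.sum_cons]
    have : sizeOf (Trm.var y : Trm F) = 1 + sizeOf y := by simp
    refine Prod.Lex.left _ _ ?_
    omega
  · simp only [List.map_map, List.map_cons, List.sum_cons]
    refine Prod.Lex.left _ _ ?_
    have : ((id rest).map ((fun p => sizeOf p.1) ∘ (fun p => (p.1, p.2.subst (single z (Trm.fn f as)))))).sum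
        = (rest.map (fun p => sizeOf p.1)).sum := by
      congr 1
    rw [this]
    have : 0 < sizeOf (Trm.fn f as) := by simp only [Trm.fn.sizeOf_spec]; omega
    omega
  · rename_i h
    simp only [List.map_append, List.sum_append, List.map_cons, List.sum_cons]
    refine Prod.Lex.left _ _ ?_
    have hz : (as.zip bs).map Prod.fst = as := List.map_fst_zip (l₁ := as) (l₂ := bs) (le_of_eq h.2)
    have : ((as.zip bs).map (fun p => sizeOf p.1)).sum = (as.map (fun t => sizeOf t)).sum := by
      rw [show ((as.zip bs).map (fun p => sizeOf p.1)) = ((as.zip bs).map Prod.fst).map sizeOf by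
        rw [List.map_map]; rfl, hz]
    rw [this]
    have := sizeOf_lt_fn f as
    omega

end Solve


section SolveProps
variable {F : Type}

theorem disj_elem {X Y : Set ℕ} (h : X ∩ Y = ∅) {x : ℕ} (hx : x ∈ X) : x ∉ Y :=
  fun hy => by have : x ∈ X ∩ Y := ⟨hx, hy⟩; rw [h] at this; exact this

theorem disj_of_forall {X Y : Set ℕ} (h : ∀ x ∈ X, x ∉ Y) : X ∩ Y = ∅ := by
  ext x
  simp only [Set.mem_inter_iff, Set.mem_empty_iff_false, iff_false, not_and]
  exact h x

@[simp] theorem single_same (z : ℕ) (a : Trm F) : single z a z = a := by simp [single]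

theorem single_other {z v : ℕ} (a : Trm F) (h : v ≠ z) : single z a v = Trm.var v := by
  simp [single, h]

theorem comp_single_eq {θ : Subst F} {z : ℕ} {a : Trm F} (h : a.subst θ = θ z) :
    Subst.comp (single z a) θ = θ := by
  funext v
  by_cases hv : v = z
  · subst hv; simp [Subst.comp, h]
  · simp [Subst.comp, single_other a hv]

theorem linear_head {t : Trm F} {L : List (Trm F)} (h : LinearList (t :: L)) :
    ∀ v, t.varCount v ≤ 1 := by
  intro v
  have := h v
  simp only [varCountList_cons] at this
  omega

theorem linear_tail {t : Trm F} {L : List (Trm F)} (h : LinearList (t :: L)) :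
    LinearList L := by
  intro v
  have := h v
  simp only [varCountList_cons] at this
  omega

theorem linear_head_disj {t : Trm F} {L : List (Trm F)} (h : LinearList (t :: L)) :
    t.vars ∩ varsList L = ∅ := by
  refine disj_of_forall (fun x hx hx2 => ?_)
  have := h x
  rw [Trm.mem_vars_iff_varCount] at hx
  rw [mem_varsList_iff_varCountList] at hx2
  simp only [varCountList_cons] at this
  omega

theorem map_pair_fst (rest : List (Trm F × Trm F)) (s : Subst F) :
    (rest.map (fun p => (p.1, p.2.subst s))).map Prod.fst = rest.map Prod.fst := by
  simp [List.map_map]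

theorem map_pair_snd (rest : List (Trm F × Trm F)) (s : Subst F) :
    (rest.map (fun p => (p.1, p.2.subst s))).map Prod.snd = substList s (rest.map Prod.snd) := by
  simp [List.map_map, substList, Function.comp_def]

theorem map_eq_map_zip {α β : Type*} {h : α → β} :
    ∀ {as bs : List α}, as.map h = bs.map h → ∀ p ∈ as.zip bs, h p.1 = h p.2 := by
  intro as
  induction as with
  | nil => intro bs _ p hp; simp at hp
  | cons a as ih =>
    intro bs heq p hp
    cases bs with
    | nil => simp at hp
    | cons b bs =>
      simp only [List.map_cons, List.cons.injEq] at heq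
      rcases List.mem_cons.mp hp with rfl | hp
      · exact heq.1
      · exact ih heq.2 p hp

/-- The invariant for `solve`. -/
def SolveInv (θ : Subst F) (l : List (Trm F × Trm F)) : Prop :=
  LinearList (l.map Prod.fst) ∧ varsList (l.map Prod.fst) ∩ varsList (l.map Prod.snd) = ∅ ∧
  ∀ p ∈ l, p.1.subst θ = p.2.subst θ

theorem SolveInv.tail {θ : Subst F} {p : Trm F × Trm F} {rest : List (Trm F × Trm F)}
    (h : SolveInv θ (p :: rest)) : SolveInv θ rest := by
  obtain ⟨h1, h2, h3⟩ := h
  refine ⟨linear_tail h1, disj_of_forall (fun x hx hx2 => ?_), fun q hq => h3 q (by simp [hq])⟩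
  have hxl : x ∈ varsList ((p :: rest).map Prod.fst) := by simp [hx]
  have hxr : x ∈ varsList ((p :: rest).map Prod.snd) := by simp [hx2]
  exact disj_elem h2 hxl hxr

theorem SolveInv.case3 {θ : Subst F} {f : F} {as : List (Trm F)} {z : ℕ}
    {rest : List (Trm F × Trm F)} (h : SolveInv θ ((Trm.fn f as, Trm.var z) :: rest)) :
    SolveInv θ (rest.map (fun p => (p.1, p.2.subst (single z (Trm.fn f as))))) := by
  obtain ⟨h1, h2, h3⟩ := h
  have horacle : (Trm.fn f as).subst θ = θ z := by simpa using h3 _ List.mem_cons_self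
  have hcomp : Subst.comp (single z (Trm.fn f as)) θ = θ := comp_single_eq horacle
  refine ⟨?_, ?_, ?_⟩
  · rw [map_pair_fst]
    exact linear_tail (by simpa using h1)
  · rw [map_pair_fst, map_pair_snd]
    refine disj_of_forall (fun x hx hx2 => ?_)
    rw [mem_varsList_substList] at hx2
    obtain ⟨w, hw, hx2⟩ := hx2
    have hxl : x ∈ varsList (((Trm.fn f as, Trm.var z) :: rest).map Prod.fst) := by simp [hx]
    by_cases hwz : w = z
    · subst hwz
      simp only [single_same] at hx2
      -- x ∈ vars (fn f as) contradicts joint linearity of lefts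
      have := linear_head_disj (by simpa using h1)
      exact disj_elem this hx2 (by simpa using hx)
    · rw [single_other _ hwz] at hx2
      simp only [Trm.vars_var, Set.mem_singleton_iff] at hx2
      subst hx2
      refine disj_elem h2 hxl ?_
      simp only [List.map_cons, varsList_cons, Set.mem_union]
      right
      exact hw
  · intro q hq
    obtain ⟨p, hp, rfl⟩ := List.mem_map.mp hq
    have := h3 p (by simp [hp])
    simp only
    rw [Trm.subst_subst, hcomp]
    exact this

theorem SolveInv.case4 {θ : Subst F} {f g : F} {as bs : List (Trm F)}
    {rest : List (Trm F × Trm F)} (h : SolveInv θ ((Trm.fn f as, Trm.fn g bs) :: rest)) :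
    (f = g ∧ as.length = bs.length) ∧ SolveInv θ (as.zip bs ++ rest) := by
  obtain ⟨h1, h2, h3⟩ := h
  have horacle := h3 _ List.mem_cons_self
  simp only [Trm.subst_fn, Trm.fn.injEq] at horacle
  obtain ⟨hfg, hmap⟩ := horacle
  have hlen : as.length = bs.length := by
    have := congrArg List.length hmap
    simpa using this
  have hfst : (as.zip bs ++ rest).map Prod.fst = as ++ rest.map Prod.fst := by
    rw [List.map_append, List.map_fst_zip (l₁ := as) (l₂ := bs) (le_of_eq hlen)]
  have hsnd : (as.zip bs ++ rest).map Prod.snd = bs ++ rest.map Prod.snd := by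
    rw [List.map_append, List.map_snd_zip (l₁ := as) (l₂ := bs) (ge_of_eq hlen)]
  have hvfst : ∀ v, varCountList v (as ++ rest.map Prod.fst)
      = varCountList v ((Trm.fn f as :: rest.map Prod.fst)) := by
    intro v
    simp [varCountList_append, varCountList_cons, Trm.varCount_fn, varCountList]
  refine ⟨⟨hfg, hlen⟩, ?_, ?_, ?_⟩
  · rw [hfst]
    intro v
    rw [hvfst v]
    simpa using h1 v
  · rw [hfst, hsnd]
    refine disj_of_forall (fun x hx hx2 => ?_)
    have hxl : x ∈ varsList (((Trm.fn f as, Trm.fn g bs) :: rest).map Prod.fst) := by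
      simp only [List.map_cons, varsList_cons, Set.mem_union, Trm.vars_fn]
      rcases (by simpa using hx : x ∈ varsList as ∨ x ∈ varsList (rest.map Prod.fst)) with h | h
      · left; simpa [mem_varsList] using mem_varsList.mp h
      · right; exact h
    have hxr : x ∈ varsList (((Trm.fn f as, Trm.fn g bs) :: rest).map Prod.snd) := by
      simp only [List.map_cons, varsList_cons, Set.mem_union, Trm.vars_fn]
      rcases (by simpa using hx2 : x ∈ varsList bs ∨ x ∈ varsList (rest.map Prod.snd)) with h | h
      · left; simpa [mem_varsList] using mem_varsList.mp h
      · right; exact h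
    exact disj_elem h2 hxl hxr
  · intro p hp
    rcases List.mem_append.mp hp with hp | hp
    · exact map_eq_map_zip hmap p hp
    · exact h3 p (by simp [hp])

end SolveProps

section SolveProps2
variable {F : Type}

theorem solve_nil : (solve [] : Subst F) = Subst.id := by rw [solve]

theorem solve_var_cons (y : ℕ) (b : Trm F) (rest : List (Trm F × Trm F)) :
    solve ((Trm.var y, b) :: rest) = Subst.comp (single y b) (solve rest) := by rw [solve]

theorem solve_fnvar_cons (f : F) (as : List (Trm F)) (z : ℕ) (rest : List (Trm F × Trm F)) :
    solve ((Trm.fn f as, Trm.var z) :: rest) = Subst.comp (single z (Trm.fn f as))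
      (solve (rest.map (fun p => (p.1, p.2.subst (single z (Trm.fn f as)))))) := by rw [solve]; rfl

theorem solve_fnfn_pos {f g : F} {as bs : List (Trm F)} (rest : List (Trm F × Trm F))
    (h : f = g ∧ as.length = bs.length) :
    solve ((Trm.fn f as, Trm.fn g bs) :: rest) = solve (as.zip bs ++ rest) := by
  rw [solve]; simp [h]

theorem solve_fnfn_neg {f g : F} {as bs : List (Trm F)} (rest : List (Trm F × Trm F))
    (h : ¬(f = g ∧ as.length = bs.length)) :
    solve ((Trm.fn f as, Trm.fn g bs) :: rest) = Subst.id := by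
  rw [solve]; simp [h]

theorem subst_single_notmem {z : ℕ} {a : Trm F} {t : Trm F} (h : z ∉ t.vars) :
    t.subst (single z a) = t := by
  have : t.subst (single z a) = t.subst Subst.id := by
    refine Trm.subst_congr (fun x hx => ?_)
    have : x ≠ z := fun he => h (he ▸ hx)
    simp [single_other a this, Subst.id]
  rw [this, Trm.subst_id]

theorem subst_cancel {σ' σ : Subst F} (h : ∀ w, (σ' w).subst σ = σ w) (t : Trm F) :
    (t.subst σ').subst σ = t.subst σ := by
  rw [Trm.subst_subst]
  exact Trm.subst_congr (fun x _ => h x)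

theorem zip_forall_map_eq {α β : Type*} {h : α → β} :
    ∀ {as bs : List α}, as.length = bs.length → (∀ p ∈ as.zip bs, h p.1 = h p.2) →
      as.map h = bs.map h := by
  intro as
  induction as with
  | nil =>
    intro bs hl _
    cases bs with
    | nil => rfl
    | cons b bs => simp at hl
  | cons a as ih =>
    intro bs hl hp
    cases bs with
    | nil => simp at hl
    | cons b bs =>
      simp only [List.map_cons, List.cons.injEq]
      refine ⟨hp (a, b) (by simp), ih (by simpa using hl) (fun p hpp => hp p (by simp [hpp]))⟩

/-- `solve` is the identity outside the variables of the system. -/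
theorem solve_outside : ∀ (l : List (Trm F × Trm F)) (v : ℕ),
    v ∉ varsList (l.map Prod.fst) → v ∉ varsList (l.map Prod.snd) → solve l v = Trm.var v := by
  intro l
  induction l using solve.induct with
  | case1 => intro v _ _; rw [solve_nil]; rfl
  | case2 y b rest ih =>
    intro v hvl hvr
    simp only [List.map_cons, varsList_cons, Set.mem_union, not_or] at hvl hvr
    rw [solve_var_cons, Subst.comp, single_other _ (by simpa using hvl.1), Trm.subst_var]
    exact ih v hvl.2 hvr.2
  | case3 f as z rest ih =>
    intro v hvl hvr
    simp only [List.map_cons, varsList_cons, Set.mem_union, not_or] at hvl hvr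
    rw [solve_fnvar_cons, Subst.comp, single_other _ (by simpa using hvr.1), Trm.subst_var]
    refine ih v (by rw [map_pair_fst]; exact hvl.2) ?_
    rw [map_pair_snd]
    intro hv
    obtain ⟨w, hw, hv⟩ := mem_varsList_substList.mp hv
    by_cases hwz : w = z
    · subst hwz
      simp only [single_same] at hv
      exact hvl.1 hv
    · rw [single_other _ hwz] at hv
      simp only [Trm.vars_var, Set.mem_singleton_iff] at hv
      subst hv
      exact hvr.2 hw
  | case4 f as g bs rest h ih =>
    intro v hvl hvr
    simp only [List.map_cons, varsList_cons, Set.mem_union, not_or] at hvl hvr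
    rw [solve_fnfn_pos rest h]
    refine ih v ?_ ?_
    · rw [List.map_append, List.map_fst_zip (l₁ := as) (l₂ := bs) (le_of_eq h.2), varsList_append]
      rintro (hv | hv)
      · exact hvl.1 (by rw [Trm.vars_fn]; simpa [mem_varsList] using mem_varsList.mp hv)
      · exact hvl.2 hv
    · rw [List.map_append, List.map_snd_zip (l₁ := as) (l₂ := bs) (ge_of_eq h.2), varsList_append]
      rintro (hv | hv)
      · exact hvr.1 (by rw [Trm.vars_fn]; simpa [mem_varsList] using mem_varsList.mp hv)
      · exact hvr.2 hv
  | case5 f as g bs rest h =>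
    intro v _ _
    rw [solve_fnfn_neg rest h]; rfl

/-- Relevance of `solve`. -/
theorem solve_vars_subset : ∀ (l : List (Trm F × Trm F)) (v : ℕ),
    (solve l v).vars ⊆ varsList (l.map Prod.fst) ∪ varsList (l.map Prod.snd) ∪ {v} := by
  intro l
  induction l using solve.induct with
  | case1 => intro v; rw [solve_nil]; simp [Subst.id]
  | case2 y b rest ih =>
    intro v x hx
    simp only [List.map_cons, varsList_cons]
    rw [solve_var_cons, Subst.comp] at hx
    by_cases hvy : v = y
    · subst hvy
      rw [single_same] at hx
      obtain ⟨w, hw, hx⟩ := mem_vars_subst.mp hx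
      have := ih w hx
      simp only [Set.mem_union, Set.mem_singleton_iff] at this ⊢
      rcases this with ((h | h) | h)
      · tauto
      · tauto
      · subst h; tauto
    · rw [single_other _ hvy, Trm.subst_var] at hx
      have := ih v hx
      simp only [Set.mem_union, Set.mem_singleton_iff] at this ⊢
      tauto
  | case3 f as z rest ih =>
    intro v x hx
    simp only [List.map_cons, varsList_cons]
    rw [solve_fnvar_cons, Subst.comp] at hx
    have key : ∀ w, x ∈ ((solve (rest.map (fun p => (p.1, p.2.subst (single z (Trm.fn f as))))) w)).vars →
        x ∈ (Trm.fn f as).vars ∨ x ∈ varsList (rest.map Prod.fst) ∨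
          x ∈ varsList (rest.map Prod.snd) ∨ x = w := by
      intro w hw
      have := ih w hw
      rw [map_pair_fst, map_pair_snd] at this
      simp only [Set.mem_union, Set.mem_singleton_iff] at this
      rcases this with ((h | h) | h)
      · tauto
      · rw [mem_varsList_substList] at h
        obtain ⟨w', hw', h⟩ := h
        by_cases hwz : w' = z
        · subst hwz; rw [single_same] at h; tauto
        · rw [single_other _ hwz] at h
          simp only [Trm.vars_var, Set.mem_singleton_iff] at h
          subst h; tauto
      · tauto
    by_cases hvz : v = z
    · subst hvz
      rw [single_same] at hx
      obtain ⟨w, hw, hx⟩ := mem_vars_subst.mp hx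
      have := key w hx
      simp only [Set.mem_union, Set.mem_singleton_iff]
      rcases this with (h | h | h | h)
      · tauto
      · tauto
      · tauto
      · subst h; tauto
    · rw [single_other _ hvz, Trm.subst_var] at hx
      have := key v hx
      simp only [Set.mem_union, Set.mem_singleton_iff]
      tauto
  | case4 f as g bs rest h ih =>
    intro v x hx
    rw [solve_fnfn_pos rest h] at hx
    have := ih v hx
    rw [List.map_append, List.map_fst_zip (l₁ := as) (l₂ := bs) (le_of_eq h.2), List.map_append,
      List.map_snd_zip (l₁ := as) (l₂ := bs) (ge_of_eq h.2), varsList_append, varsList_append] at this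
    simp only [List.map_cons, varsList_cons, Set.mem_union, Set.mem_singleton_iff,
      Trm.vars_fn] at this ⊢
    rcases this with (((h1 | h1) | (h1 | h1)) | h1)
    · left; left; left; simpa [mem_varsList] using mem_varsList.mp h1
    · tauto
    · left; right; left; simpa [mem_varsList] using mem_varsList.mp h1
    · tauto
    · tauto
  | case5 f as g bs rest h =>
    intro v x hx
    rw [solve_fnfn_neg rest h] at hx
    simp only [Subst.id, Trm.vars_var, Set.mem_singleton_iff] at hx
    subst hx
    simp

/-- `solve` is more general than any unifier (indeed the unifier itself factors). -/
theorem solve_general : ∀ (l : List (Trm F × Trm F)) (σ : Subst F),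
    (∀ p ∈ l, p.1.subst σ = p.2.subst σ) → ∀ v, (solve l v).subst σ = σ v := by
  intro l
  induction l using solve.induct with
  | case1 => intro σ _ v; rw [solve_nil]; simp [Subst.id]
  | case2 y b rest ih =>
    intro σ hσ v
    have hb : σ y = b.subst σ := by simpa using hσ _ List.mem_cons_self
    have ihr := ih σ (fun p hp => hσ p (by simp [hp]))
    rw [solve_var_cons, Subst.comp]
    by_cases hvy : v = y
    · subst hvy
      rw [single_same, subst_cancel ihr, ← hb]
    · rw [single_other _ hvy, Trm.subst_var]
      exact ihr v
  | case3 f as z rest ih =>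
    intro σ hσ v
    have hb : (Trm.fn f as).subst σ = σ z := by simpa using hσ _ List.mem_cons_self
    have hcomp : Subst.comp (single z (Trm.fn f as)) σ = σ := comp_single_eq hb
    have ihr := ih σ (by
      intro q hq
      obtain ⟨p, hp, rfl⟩ := List.mem_map.mp hq
      simp only
      rw [Trm.subst_subst, hcomp]
      exact hσ p (by simp only [id] at hp; simp [hp]))
    rw [solve_fnvar_cons, Subst.comp]
    by_cases hvz : v = z
    · subst hvz
      rw [single_same]
      exact (subst_cancel ihr _).trans hb
    · rw [single_other _ hvz, Trm.subst_var]
      exact ihr v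
  | case4 f as g bs rest h ih =>
    intro σ hσ v
    have hb := hσ _ List.mem_cons_self
    simp only [Trm.subst_fn, Trm.fn.injEq] at hb
    rw [solve_fnfn_pos rest h]
    refine ih σ (fun p hp => ?_) v
    rcases List.mem_append.mp hp with hp | hp
    · exact map_eq_map_zip hb.2 p hp
    · exact hσ p (by simp [hp])
  | case5 f as g bs rest h =>
    intro σ hσ v
    exfalso
    have hb := hσ _ List.mem_cons_self
    simp only [Trm.subst_fn, Trm.fn.injEq] at hb
    exact h ⟨hb.1, by have := congrArg List.length hb.2; simpa using this⟩

/-- `solve` fixes variables that the oracle fixes and that do not occur on the left. -/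
theorem solve_fixes {θ : Subst F} : ∀ (l : List (Trm F × Trm F)), SolveInv θ l →
    ∀ x, θ x = Trm.var x → x ∉ varsList (l.map Prod.fst) → solve l x = Trm.var x := by
  intro l
  induction l using solve.induct with
  | case1 => intro _ x _ _; rw [solve_nil]; rfl
  | case2 y b rest ih =>
    intro hInv x hx hxl
    simp only [List.map_cons, varsList_cons, Set.mem_union, not_or] at hxl
    rw [solve_var_cons, Subst.comp, single_other _ (by simpa using hxl.1), Trm.subst_var]
    exact ih hInv.tail x hx hxl.2
  | case3 f as z rest ih =>
    intro hInv x hx hxl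
    simp only [List.map_cons, varsList_cons, Set.mem_union, not_or] at hxl
    have horacle : (Trm.fn f as).subst θ = θ z := by
      simpa using hInv.2.2 _ List.mem_cons_self
    have hxz : x ≠ z := by
      rintro rfl
      rw [hx] at horacle
      simp at horacle
    rw [solve_fnvar_cons, Subst.comp, single_other _ hxz, Trm.subst_var]
    refine ih hInv.case3 x hx ?_
    rw [map_pair_fst]
    exact hxl.2
  | case4 f as g bs rest h ih =>
    intro hInv x hx hxl
    simp only [List.map_cons, varsList_cons, Set.mem_union, not_or] at hxl
    rw [solve_fnfn_pos rest h]
    refine ih (hInv.case4).2 x hx ?_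
    rw [List.map_append, List.map_fst_zip (l₁ := as) (l₂ := bs) (le_of_eq h.2), varsList_append]
    rintro (hv | hv)
    · exact hxl.1 (by rw [Trm.vars_fn]; simpa [mem_varsList] using mem_varsList.mp hv)
    · exact hxl.2 hv
  | case5 f as g bs rest h =>
    intro hInv _ _ _
    exact absurd (hInv.case4).1 h

/-- `solve` unifies the system. -/
theorem solve_unifies {θ : Subst F} : ∀ (l : List (Trm F × Trm F)), SolveInv θ l →
    ∀ p ∈ l, p.1.subst (solve l) = p.2.subst (solve l) := by
  intro l
  induction l using solve.induct with
  | case1 => intro _ p hp; simp at hp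
  | case2 y b rest ih =>
    intro hInv p hp
    have hyl : y ∉ varsList (rest.map Prod.fst) := by
      have := linear_head_disj (show LinearList ((Trm.var y) :: rest.map Prod.fst) by
        simpa using hInv.1)
      exact disj_elem this (by simp)
    have hyr : y ∉ varsList (rest.map Prod.snd) ∪ b.vars := by
      intro hy
      refine disj_elem hInv.2.1 (show y ∈ _ by simp) ?_
      simp only [List.map_cons, varsList_cons, Set.mem_union]
      rcases hy with hy | hy
      · right; exact hy
      · left; exact hy
    simp only [Set.mem_union, not_or] at hyr
    rw [solve_var_cons]
    rcases List.mem_cons.mp hp with rfl | hp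
    · show (Trm.var y).subst _ = _
      rw [Trm.subst_var, ← Trm.subst_subst, subst_single_notmem hyr.2]
      show (single y b y).subst _ = _
      rw [single_same]
    · have e1 : p.1.subst (single y b) = p.1 := subst_single_notmem
        (fun hy => hyl (mem_varsList.mpr ⟨p.1, List.mem_map.mpr ⟨p, hp, rfl⟩, hy⟩))
      have e2 : p.2.subst (single y b) = p.2 := subst_single_notmem
        (fun hy => hyr.1 (mem_varsList.mpr ⟨p.2, List.mem_map.mpr ⟨p, hp, rfl⟩, hy⟩))
      rw [← Trm.subst_subst, ← Trm.subst_subst, e1, e2]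
      exact ih hInv.tail p hp
  | case3 f as z rest ih =>
    intro hInv p hp
    have hzl : z ∉ varsList (((Trm.fn f as, Trm.var z) :: rest).map Prod.fst) :=
      fun h => disj_elem hInv.2.1 h (by simp)
    simp only [List.map_cons, varsList_cons, Set.mem_union, not_or] at hzl
    rw [solve_fnvar_cons]
    rcases List.mem_cons.mp hp with rfl | hp
    · show (Trm.fn f as).subst _ = (Trm.var z).subst _
      rw [Trm.subst_var, ← Trm.subst_subst, subst_single_notmem (by simpa using hzl.1)]
      show _ = (single z (Trm.fn f as) z).subst _
      rw [single_same]
    · have e1 : p.1.subst (single z (Trm.fn f as)) = p.1 := subst_single_notmem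
        (fun hy => hzl.2 (mem_varsList.mpr ⟨p.1, List.mem_map.mpr ⟨p, hp, rfl⟩, hy⟩))
      have ihr := ih hInv.case3 (p.1, p.2.subst (single z (Trm.fn f as)))
        (List.mem_map.mpr ⟨p, hp, rfl⟩)
      simp only at ihr
      rw [← Trm.subst_subst, ← Trm.subst_subst, e1]
      exact ihr
  | case4 f as g bs rest h ih =>
    intro hInv p hp
    rw [solve_fnfn_pos rest h]
    rcases List.mem_cons.mp hp with rfl | hp
    · show (Trm.fn f as).subst _ = (Trm.fn g bs).subst _
      simp only [Trm.subst_fn]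
      rw [h.1]
      congr 1
      exact zip_forall_map_eq h.2
        (fun q hq => ih (hInv.case4).2 q (List.mem_append.mpr (Or.inl hq)))
    · exact ih (hInv.case4).2 p (List.mem_append.mpr (Or.inr hp))
  | case5 f as g bs rest h => intro hInv; exact absurd (hInv.case4).1 h

end SolveProps2

section SolveLinear
variable {F : Type}

theorem fn_vars_eq_varsList (g : F) (bs : List (Trm F)) :
    (Trm.fn g bs).vars = varsList bs := by
  rw [Trm.vars_fn]; rfl

/-- Images of distinct right-variables under `solve` are linear and pairwise var-disjoint. -/
theorem solve_linear {θ : Subst F} : ∀ (l : List (Trm F × Trm F)), SolveInv θ l →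
    (∀ z ∈ varsList (l.map Prod.snd), ∀ v, ((solve l) z).varCount v ≤ 1) ∧
    (∀ z ∈ varsList (l.map Prod.snd), ∀ z' ∈ varsList (l.map Prod.snd), z ≠ z' →
      ((solve l) z).vars ∩ ((solve l) z').vars = ∅) := by
  intro l
  induction l using solve.induct with
  | case1 => exact fun _ => ⟨fun z hz => by simp at hz, fun z hz => by simp at hz⟩
  | case2 y b rest ih =>
    intro hInv
    obtain ⟨ih1, ih2⟩ := ih hInv.tail
    have hRV : varsList (((Trm.var y, b) :: rest).map Prod.snd)
        = b.vars ∪ varsList (rest.map Prod.snd) := by simp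
    have hzny : ∀ z ∈ varsList (((Trm.var y, b) :: rest).map Prod.snd), z ≠ y := by
      intro z hz
      rintro rfl
      exact disj_elem hInv.2.1 (by simp) hz
    have heval : ∀ z ∈ varsList (((Trm.var y, b) :: rest).map Prod.snd),
        solve ((Trm.var y, b) :: rest) z = solve rest z := by
      intro z hz
      rw [solve_var_cons, Subst.comp, single_other _ (hzny z hz), Trm.subst_var]
    have hout : ∀ z ∈ varsList (((Trm.var y, b) :: rest).map Prod.snd),
        z ∉ varsList (rest.map Prod.snd) → solve rest z = Trm.var z := by
      intro z hz hzr
      refine solve_outside rest z (fun hzl => ?_) hzr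
      refine disj_elem hInv.2.1 ?_ hz
      simp only [List.map_cons, varsList_cons, Set.mem_union]
      right
      exact hzl
    constructor
    · intro z hz v
      rw [heval z hz]
      by_cases hzr : z ∈ varsList (rest.map Prod.snd)
      · exact ih1 z hzr v
      · rw [hout z hz hzr]
        simp only [Trm.varCount_var]
        split <;> omega
    · intro z hz z' hz' hne
      rw [heval z hz, heval z' hz']
      by_cases hzr : z ∈ varsList (rest.map Prod.snd) <;>
        by_cases hzr' : z' ∈ varsList (rest.map Prod.snd)
      · exact ih2 z hzr z' hzr' hne
      · rw [hout z' hz' hzr']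
        refine disj_of_forall (fun x hx hx2 => ?_)
        simp only [Trm.vars_var, Set.mem_singleton_iff] at hx2
        subst hx2
        have := solve_vars_subset rest z hx
        simp only [Set.mem_union, Set.mem_singleton_iff] at this
        rcases this with ((h | h) | h)
        · refine disj_elem hInv.2.1 ?_ hz'
          simp only [List.map_cons, varsList_cons, Set.mem_union]
          right; exact h
        · exact hzr' h
        · exact hne h.symm
      · rw [hout z hz hzr]
        refine disj_of_forall (fun x hx hx2 => ?_)
        simp only [Trm.vars_var, Set.mem_singleton_iff] at hx
        subst hx
        have := solve_vars_subset rest z' hx2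
        simp only [Set.mem_union, Set.mem_singleton_iff] at this
        rcases this with ((h | h) | h)
        · refine disj_elem hInv.2.1 ?_ hz
          simp only [List.map_cons, varsList_cons, Set.mem_union]
          right; exact h
        · exact hzr h
        · exact hne h
      · rw [hout z hz hzr, hout z' hz' hzr']
        refine disj_of_forall (fun x hx hx2 => ?_)
        simp only [Trm.vars_var, Set.mem_singleton_iff] at hx hx2
        exact hne (hx ▸ hx2 ▸ rfl)
  | case3 f as z0 rest ih =>
    intro hInv
    set a := Trm.fn f as with ha
    set rest' := rest.map (fun p => (p.1, p.2.subst (single z0 a))) with hrest'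
    obtain ⟨ih1, ih2⟩ := ih hInv.case3
    set σ' := solve rest' with hσ'
    have hfst' : rest'.map Prod.fst = rest.map Prod.fst := map_pair_fst rest _
    have hsnd' : rest'.map Prod.snd = substList (single z0 a) (rest.map Prod.snd) :=
      map_pair_snd rest _
    have hz0l : z0 ∉ varsList (((a, Trm.var z0) :: rest).map Prod.fst) :=
      fun h => disj_elem hInv.2.1 h (by simp)
    simp only [List.map_cons, varsList_cons, Set.mem_union, not_or] at hz0l
    have adisj : a.vars ∩ varsList (rest.map Prod.fst) = ∅ := by
      have := linear_head_disj (show LinearList (a :: rest.map Prod.fst) by simpa using hInv.1)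
      exact this
    have alin : ∀ v, a.varCount v ≤ 1 :=
      linear_head (show LinearList (a :: rest.map Prod.fst) by simpa using hInv.1)
    have mmRV : ∀ x ∈ varsList (rest.map Prod.snd),
        x ∈ varsList (((a, Trm.var z0) :: rest).map Prod.snd) := by
      intro x hx
      simp only [List.map_cons, varsList_cons, Set.mem_union]
      right; exact hx
    have aRdisj : ∀ w ∈ a.vars, w ∉ varsList (((a, Trm.var z0) :: rest).map Prod.snd) := by
      intro w hw hwr
      refine disj_elem hInv.2.1 ?_ hwr
      simp only [List.map_cons, varsList_cons, Set.mem_union]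
      left; exact hw
    have mm1 : ∀ x ∈ varsList (rest.map Prod.snd), x ≠ z0 → x ∈ varsList (rest'.map Prod.snd) := by
      intro x hx hxz
      rw [hsnd', mem_varsList_substList]
      exact ⟨x, hx, by rw [single_other _ hxz]; simp⟩
    have mm2 : z0 ∈ varsList (rest.map Prod.snd) → ∀ w ∈ a.vars,
        w ∈ varsList (rest'.map Prod.snd) := by
      intro hz0 w hw
      rw [hsnd', mem_varsList_substList]
      exact ⟨z0, hz0, by rw [single_same]; exact hw⟩
    have mmout : z0 ∉ varsList (rest.map Prod.snd) → ∀ w ∈ a.vars, σ' w = Trm.var w := by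
      intro hz0 w hw
      refine solve_outside rest' w (fun h => ?_) (fun h => ?_)
      · rw [hfst'] at h
        exact disj_elem adisj hw h
      · rw [hsnd', mem_varsList_substList] at h
        obtain ⟨w', hw', h⟩ := h
        by_cases hwz : w' = z0
        · exact hz0 (hwz ▸ hw')
        · rw [single_other _ hwz] at h
          simp only [Trm.vars_var, Set.mem_singleton_iff] at h
          subst h
          exact aRdisj w hw (mmRV _ hw')
    have heval : ∀ z, z ≠ z0 →
        solve ((a, Trm.var z0) :: rest) z = σ' z := by
      intro z hz
      rw [solve_fnvar_cons, Subst.comp, single_other _ hz, Trm.subst_var]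
    have hevalz0 : solve ((a, Trm.var z0) :: rest) z0 = a.subst σ' := by
      rw [solve_fnvar_cons, Subst.comp, single_same]
    -- image of z0 is linear
    have hlinz0 : ∀ v, (a.subst σ').varCount v ≤ 1 := by
      by_cases hz0r : z0 ∈ varsList (rest.map Prod.snd)
      · exact Trm.linear_subst alin (fun w hw v => ih1 w (mm2 hz0r w hw) v)
          (fun w hw w' hw' hne => ih2 w (mm2 hz0r w hw) w' (mm2 hz0r w' hw') hne)
      · refine Trm.linear_subst alin (fun w hw v => by
            rw [mmout hz0r w hw]
            simp only [Trm.varCount_var]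
            split <;> omega)
          (fun w hw w' hw' hne => ?_)
        rw [mmout hz0r w hw, mmout hz0r w' hw']
        refine disj_of_forall (fun x hx hx2 => ?_)
        simp only [Trm.vars_var, Set.mem_singleton_iff] at hx hx2
        exact hne (hx ▸ hx2 ▸ rfl)
    -- image of z0 is var-disjoint from image of any other right variable
    have hdisjz0 : ∀ z' ∈ varsList (rest.map Prod.snd), z' ≠ z0 →
        (a.subst σ').vars ∩ (σ' z').vars = ∅ := by
      intro z' hz' hnez
      refine disj_of_forall (fun x hx hx2 => ?_)
      obtain ⟨w, hw, hx⟩ := mem_vars_subst.mp hx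
      by_cases hz0r : z0 ∈ varsList (rest.map Prod.snd)
      · have hwne : w ≠ z' := by
          rintro rfl
          exact aRdisj w hw (mmRV _ hz')
        have := ih2 w (mm2 hz0r w hw) z' (mm1 z' hz' hnez) hwne
        exact disj_elem this hx hx2
      · rw [mmout hz0r w hw] at hx
        simp only [Trm.vars_var, Set.mem_singleton_iff] at hx
        subst hx
        have := solve_vars_subset rest' z' hx2
        rw [hfst', hsnd'] at this
        simp only [Set.mem_union, Set.mem_singleton_iff] at this
        rcases this with ((h | h) | h)
        · exact disj_elem adisj hw h
        · rw [mem_varsList_substList] at h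
          obtain ⟨w', hw', h⟩ := h
          by_cases hwz : w' = z0
          · exact hz0r (hwz ▸ hw')
          · rw [single_other _ hwz] at h
            simp only [Trm.vars_var, Set.mem_singleton_iff] at h
            subst h
            exact aRdisj _ hw (mmRV _ hw')
        · subst h
          exact aRdisj _ hw (mmRV _ hz')
    have hRV : ∀ z, z ∈ varsList (((a, Trm.var z0) :: rest).map Prod.snd) ↔
        (z = z0 ∨ z ∈ varsList (rest.map Prod.snd)) := by
      intro z
      simp [ha]
    constructor
    · intro z hz v
      rcases (hRV z).mp hz with rfl | hz2
      · rw [hevalz0]; exact hlinz0 v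
      · by_cases hzz0 : z = z0
        · subst hzz0; rw [hevalz0]; exact hlinz0 v
        · rw [heval z hzz0]
          exact ih1 z (mm1 z hz2 hzz0) v
    · intro z hz z' hz' hne
      by_cases hzz0 : z = z0 <;> by_cases hzz0' : z' = z0
      · exact absurd (hzz0.trans hzz0'.symm) hne
      · subst hzz0
        rw [hevalz0, heval z' hzz0']
        rcases (hRV z').mp hz' with h | h
        · exact absurd h hzz0'
        · exact hdisjz0 z' h hzz0'
      · subst hzz0'
        rw [hevalz0, heval z hzz0]
        rcases (hRV z).mp hz with h | h
        · exact absurd h hzz0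
        · rw [Set.inter_comm]
          exact hdisjz0 z h hzz0
      · rw [heval z hzz0, heval z' hzz0']
        rcases (hRV z).mp hz with h | h
        · exact absurd h hzz0
        rcases (hRV z').mp hz' with h' | h'
        · exact absurd h' hzz0'
        exact ih2 z (mm1 z h hzz0) z' (mm1 z' h' hzz0') hne
  | case4 f as g bs rest h ih =>
    intro hInv
    obtain ⟨ih1, ih2⟩ := ih (hInv.case4).2
    have hset : varsList (((Trm.fn f as, Trm.fn g bs) :: rest).map Prod.snd)
        = varsList ((as.zip bs ++ rest).map Prod.snd) := by
      rw [List.map_append, List.map_snd_zip (l₁ := as) (l₂ := bs) (ge_of_eq h.2), varsList_append]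
      simp only [List.map_cons, varsList_cons, fn_vars_eq_varsList]
    simp only [solve_fnfn_pos rest h, hset]
    exact ⟨ih1, ih2⟩
  | case5 f as g bs rest h =>
    intro hInv
    exact absurd (hInv.case4).1 h

end SolveLinear

section Transport
variable {P F : Type}

theorem substList_comp (σ τ : Subst F) (L : List (Trm F)) :
    substList (Subst.comp σ τ) L = substList τ (substList σ L) := by
  simp only [substList, List.map_map]
  exact List.map_congr_left (fun t _ => (Trm.subst_subst σ τ t).symm)

theorem pointwise_of_substList {θ σ : Subst F} {L : List (Trm F)}
    (h : substList σ (substList θ L) = substList σ L) :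
    ∀ z ∈ varsList L, (θ z).subst σ = σ z := by
  induction L with
  | nil => simp
  | cons t L ih =>
    simp only [substList_cons, List.cons.injEq] at h
    intro z hz
    rcases (by simpa using hz : z ∈ t.vars ∨ z ∈ varsList L) with hz | hz
    · exact Trm.pointwise_of_subst_subst_eq h.1 z hz
    · exact ih h.2 z hz

theorem map_split {α β : Type*} {f : α → β} :
    ∀ {Q : List α} {X : List β} {a : β} {Y : List β}, Q.map f = X ++ a :: Y →
      ∃ X' a' Y', Q = X' ++ a' :: Y' ∧ X = X'.map f ∧ a = f a' ∧ Y = Y'.map f := by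
  intro Q
  induction Q with
  | nil =>
    intro X a Y h
    cases X <;> simp at h
  | cons q Q ih =>
    intro X a Y h
    cases X with
    | nil =>
      simp only [List.map_cons, List.nil_append, List.cons.injEq] at h
      exact ⟨[], q, Q, rfl, rfl, h.1.symm, h.2.symm⟩
    | cons x X =>
      simp only [List.map_cons, List.cons_append, List.cons.injEq] at h
      obtain ⟨X', a', Y', h1, h2, h3, h4⟩ := ih h.2
      exact ⟨q :: X', a', Y', by rw [h1]; rfl, by simp [h2, h.1.symm], h3, h4⟩

theorem queryVars_split {Q : Query P F} {X : Query P F} {a : Atom P F} {Y : Query P F}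
    (h : Q = X ++ a :: Y) :
    varsList a.inp ⊆ queryVars Q ∧ varsList (queryOut (a :: Y)) ⊆ queryVars Q := by
  subst h
  constructor
  · exact varsList_inp_subset_queryVars (by simp)
  · intro x hx
    simp only [queryOut_cons, varsList_append, Set.mem_union] at hx
    rcases hx with hx | hx
    · exact varsList_out_subset_queryVars (by simp) hx
    · obtain ⟨b, hb, h⟩ := mem_queryVars.mp (varsList_queryOut_subset_queryVars hx)
      exact mem_queryVars.mpr ⟨b, by simp [hb], h⟩

/-- Nicely-modedness is preserved by injective variable-valued substitutions. -/
theorem NMQuery.subst_varmap {Q : Query P F} {δ : Subst F} {V : Set ℕ}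
    (hQ : NMQuery Q) (hsub : queryVars Q ⊆ V)
    (hv : ∀ x ∈ V, ∃ w, δ x = Trm.var w)
    (hinj : ∀ x ∈ V, ∀ x' ∈ V, δ x = δ x' → x = x') :
    NMQuery (Q.map (Atom.subst δ)) := by
  refine NMQuery.of_split ?_ ?_
  · rw [queryOut_map_subst]
    exact LinearList.subst_varmap hQ.1
      (fun x hx => hsub (varsList_queryOut_subset_queryVars hx)) hv hinj
  · intro X a Y hs
    obtain ⟨X', a', Y', rfl, hX, ha, hY⟩ := map_split hs
    have hsplit := hQ.split (rfl : X' ++ a' :: Y' = X' ++ a' :: Y')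
    have hQV := queryVars_split (rfl : X' ++ a' :: Y' = X' ++ a' :: Y')
    subst ha; subst hY
    have : queryOut (a'.subst δ :: Y'.map (Atom.subst δ)) = substList δ (queryOut (a' :: Y')) := by
      rw [show a'.subst δ :: Y'.map (Atom.subst δ) = (a' :: Y').map (Atom.subst δ) from rfl,
        queryOut_map_subst]
    rw [this, Atom.inp_subst]
    exact disjoint_subst_varmap hsplit
      (fun x hx => hsub (hQV.1 hx)) (fun x hx => hsub (hQV.2 hx)) hv hinj

theorem split_cases {α : Type*} :
    ∀ {L1 L2 : List α} {X : List α} {a : α} {Y : List α}, L1 ++ L2 = X ++ a :: Y →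
      (∃ A1 A2, L1 = A1 ++ a :: A2 ∧ X = A1 ∧ Y = A2 ++ L2) ∨
      (∃ X2, X = L1 ++ X2 ∧ L2 = X2 ++ a :: Y) := by
  intro L1
  induction L1 with
  | nil =>
    intro L2 X a Y h
    right
    exact ⟨X, rfl, by simpa using h⟩
  | cons b L1 ih =>
    intro L2 X a Y h
    cases X with
    | nil =>
      simp only [List.cons_append, List.nil_append, List.cons.injEq] at h
      left
      exact ⟨[], L1, by rw [h.1]; rfl, rfl, h.2.symm⟩
    | cons x X =>
      simp only [List.cons_append, List.cons.injEq] at h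
      rcases ih h.2 with ⟨A1, A2, h1, h2, h3⟩ | ⟨X2, h1, h2⟩
      · left
        exact ⟨b :: A1, A2, by rw [h1]; rfl, by rw [h2, h.1], h3⟩
      · right
        exact ⟨X2, by rw [h1, h.1]; rfl, h2⟩

theorem three_way_split {α : Type*} {A Bd C X : List α} {a : α} {Y : List α}
    (h : A ++ Bd ++ C = X ++ a :: Y) :
    (∃ A1 A2, A = A1 ++ a :: A2 ∧ X = A1 ∧ Y = A2 ++ Bd ++ C) ∨
    (∃ B1 B2, Bd = B1 ++ a :: B2 ∧ X = A ++ B1 ∧ Y = B2 ++ C) ∨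
    (∃ C1 C2, C = C1 ++ a :: C2 ∧ X = A ++ Bd ++ C1 ∧ Y = C2) := by
  rw [List.append_assoc] at h
  rcases split_cases h with ⟨A1, A2, h1, h2, h3⟩ | ⟨X2, h1, h2⟩
  · left
    exact ⟨A1, A2, h1, h2, by rw [h3, List.append_assoc]⟩
  · rcases split_cases h2 with ⟨B1, B2, g1, g2, g3⟩ | ⟨X3, g1, g2⟩
    · right; left
      exact ⟨B1, B2, g1, by rw [h1, g2], g3⟩
    · right; right
      refine ⟨X3, Y, ?_, ?_, rfl⟩
      · rw [g2]
      · rw [h1, g1, List.append_assoc]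

end Transport

section Assemble
variable {P F : Type}

set_option maxHeartbeats 1000000 in
theorem nm_assemble (A C : Query P F) (B : Atom P F) (c : Clause P F) (ψ : Subst F)
    (hQ : NMQuery (A ++ B :: C)) (hc : NMClause c)
    (hdisj : queryVars (A ++ B :: C) ∩ Clause.vars c = ∅)
    (h1 : ∀ x ∈ varsList B.inp, ψ x = Trm.var x)
    (h1' : ∀ x, x ∉ (varsList B.inp ∪ varsList B.out ∪ varsList c.head.inp ∪
      varsList c.head.out) → ψ x = Trm.var x)
    (h2 : ∀ x ∈ varsList c.head.inp, (ψ x).vars ⊆ varsList B.inp)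
    (h3 : ∀ z ∈ varsList c.head.out, z ∉ varsList c.head.inp →
      ∀ z' ∈ varsList c.head.out, z' ∉ varsList c.head.inp → z ≠ z' →
      (ψ z).vars ∩ (ψ z').vars = ∅)
    (h4 : ∀ z ∈ varsList c.head.out, z ∉ varsList c.head.inp → ∀ v, (ψ z).varCount v ≤ 1)
    (h5 : ∀ z ∈ varsList c.head.out, z ∉ varsList c.head.inp →
      (ψ z).vars ∩ varsList B.inp = ∅)
    (h6 : ∀ v, (ψ v).vars ⊆ (varsList B.inp ∪ varsList B.out ∪ varsList c.head.inp ∪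
      varsList c.head.out) ∪ {v}) :
    NMQuery ((A ++ c.body ++ C).map (Atom.subst ψ)) := by
  classical
  set W : Set ℕ := varsList B.inp ∪ varsList B.out ∪ varsList c.head.inp ∪
      varsList c.head.out with hW
  -- basic extraction
  have hQl : LinearList (queryOut A ++ (B.out ++ queryOut C)) := by
    have := hQ.1
    simpa using this
  have hsB : varsList B.inp ∩ varsList (B.out ++ queryOut C) = ∅ := by
    have := hQ.split (rfl : A ++ B :: C = A ++ B :: C)
    simpa using this
  have hbodyNM : NMQuery c.body := hc.1
  have hlinB : LinearList (queryOut c.body) := hbodyNM.1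
  have hs0 : varsList c.head.inp ∩ varsList (queryOut c.body) = ∅ := hc.2
  have hQC : ∀ x ∈ queryVars (A ++ B :: C), x ∉ Clause.vars c := fun x hx => disj_elem hdisj hx
  have hCQ : ∀ x ∈ Clause.vars c, x ∉ queryVars (A ++ B :: C) := fun x hx hq => hQC x hq hx
  -- subset plumbing
  have hSq : varsList B.inp ⊆ queryVars (A ++ B :: C) :=
    varsList_inp_subset_queryVars (by simp)
  have hTq : varsList B.out ⊆ queryVars (A ++ B :: C) :=
    varsList_out_subset_queryVars (by simp)
  have houtAq : varsList (queryOut A) ⊆ queryVars (A ++ B :: C) := by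
    intro x hx
    refine varsList_queryOut_subset_queryVars ?_
    simp only [queryOut_append, queryOut_cons, varsList_append, Set.mem_union]
    tauto
  have houtCq : varsList (queryOut C) ⊆ queryVars (A ++ B :: C) := by
    intro x hx
    refine varsList_queryOut_subset_queryVars ?_
    simp only [queryOut_append, queryOut_cons, varsList_append, Set.mem_union]
    tauto
  have hS0c : varsList c.head.inp ⊆ Clause.vars c := by
    intro x hx
    simp only [Clause.vars, Atom.vars, Set.mem_union]
    tauto
  have hT0c : varsList c.head.out ⊆ Clause.vars c := by
    intro x hx
    simp only [Clause.vars, Atom.vars, Set.mem_union]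
    tauto
  have houtBc : varsList (queryOut c.body) ⊆ Clause.vars c := by
    intro x hx
    simp only [Clause.vars, Set.mem_union]
    exact Or.inr (varsList_queryOut_subset_queryVars hx)
  -- z-classification
  have zclassifyA : ∀ z ∈ varsList (queryOut A), z ∈ varsList B.inp ∨ z ∉ W := by
    intro z hz
    by_cases hzS : z ∈ varsList B.inp
    · exact Or.inl hzS
    right
    have hzT : z ∉ varsList B.out := by
      intro hzT
      refine disj_elem (LinearList.disjoint_of_append hQl) hz ?_
      simp only [varsList_append, Set.mem_union]
      exact Or.inl hzT
    have hzc : z ∉ Clause.vars c := hQC z (houtAq hz)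
    rw [hW]
    simp only [Set.mem_union, not_or]
    exact ⟨⟨⟨hzS, hzT⟩, fun h => hzc (hS0c h)⟩, fun h => hzc (hT0c h)⟩
  have zclassifyBody : ∀ z ∈ varsList (queryOut c.body),
      (z ∈ varsList c.head.out ∧ z ∉ varsList c.head.inp) ∨ z ∉ W := by
    intro z hz
    have hzq : z ∉ queryVars (A ++ B :: C) := hCQ z (houtBc hz)
    have hz0 : z ∉ varsList c.head.inp := fun h => disj_elem hs0 h hz
    by_cases hzT0 : z ∈ varsList c.head.out
    · exact Or.inl ⟨hzT0, hz0⟩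
    right
    rw [hW]
    simp only [Set.mem_union, not_or]
    exact ⟨⟨⟨fun h => hzq (hSq h), fun h => hzq (hTq h)⟩, hz0⟩, hzT0⟩
  have zclassifyC : ∀ z ∈ varsList (queryOut C), z ∉ W := by
    intro z hz
    have hzS : z ∉ varsList B.inp := by
      intro h
      refine disj_elem hsB h ?_
      simp only [varsList_append, Set.mem_union]
      exact Or.inr hz
    have hzT : z ∉ varsList B.out := by
      intro h
      have h2 := LinearList.disjoint_of_append (LinearList.of_append_right hQl)
      exact disj_elem h2 h hz
    have hzc : z ∉ Clause.vars c := hQC z (houtCq hz)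
    rw [hW]
    simp only [Set.mem_union, not_or]
    exact ⟨⟨⟨hzS, hzT⟩, fun h => hzc (hS0c h)⟩, fun h => hzc (hT0c h)⟩
  -- the three z classes
  have zcl : ℕ → Prop := fun z => z ∈ varsList B.inp ∨
    (z ∈ varsList c.head.out ∧ z ∉ varsList c.head.inp) ∨ z ∉ W
  -- pairwise disjointness of images for z-classes
  have hSW : varsList B.inp ⊆ W := by rw [hW]; intro x hx; simp only [Set.mem_union]; tauto
  have hT0W : varsList c.head.out ⊆ W := by
    rw [hW]; intro x hx; simp only [Set.mem_union]; tauto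
  have zpair : ∀ z, (z ∈ varsList B.inp ∨
      (z ∈ varsList c.head.out ∧ z ∉ varsList c.head.inp) ∨ z ∉ W) → ∀ z', (z' ∈ varsList B.inp ∨
      (z' ∈ varsList c.head.out ∧ z' ∉ varsList c.head.inp) ∨ z' ∉ W) → z ≠ z' →
      (ψ z).vars ∩ (ψ z').vars = ∅ := by
    have sing2 : ∀ z z', ψ z = Trm.var z → ψ z' = Trm.var z' → z ≠ z' →
        (ψ z).vars ∩ (ψ z').vars = ∅ := by
      intro z z' e1 e2 hne
      rw [e1, e2]
      refine disj_of_forall (fun x hx hx2 => ?_)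
      simp only [Trm.vars_var, Set.mem_singleton_iff] at hx hx2
      exact hne (hx ▸ hx2 ▸ rfl)
    have singT0 : ∀ z z', ψ z = Trm.var z → z ∈ varsList B.inp →
        z' ∈ varsList c.head.out → z' ∉ varsList c.head.inp →
        (ψ z).vars ∩ (ψ z').vars = ∅ := by
      intro z z' e1 hzS hz'T0 hz'S0
      rw [e1]
      refine disj_of_forall (fun x hx hx2 => ?_)
      simp only [Trm.vars_var, Set.mem_singleton_iff] at hx
      subst hx
      exact disj_elem (h5 z' hz'T0 hz'S0) hx2 hzS
    have singW : ∀ z z', ψ z = Trm.var z → z ∉ W → z ≠ z' →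
        (ψ z').vars ⊆ W ∪ {z'} → (ψ z).vars ∩ (ψ z').vars = ∅ := by
      intro z z' e1 hzW hne hsub
      rw [e1]
      refine disj_of_forall (fun x hx hx2 => ?_)
      simp only [Trm.vars_var, Set.mem_singleton_iff] at hx
      subst hx
      rcases hsub hx2 with h | h
      · exact hzW h
      · exact hne (by simpa using h)
    intro z hz z' hz' hne
    rcases hz with hz | hz | hz <;> rcases hz' with hz' | hz' | hz'
    · exact sing2 z z' (h1 z hz) (h1 z' hz') hne
    · exact singT0 z z' (h1 z hz) hz hz'.1 hz'.2
    · rw [Set.inter_comm]; exact singW z' z (h1' z' hz') hz' (Ne.symm hne) (h6 z)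
    · rw [Set.inter_comm]
      exact singT0 z' z (h1 z' hz') hz' hz.1 hz.2
    · exact h3 z hz.1 hz.2 z' hz'.1 hz'.2 hne
    · rw [Set.inter_comm]; exact singW z' z (h1' z' hz') hz' (Ne.symm hne) (h6 z)
    · exact singW z z' (h1' z hz) hz hne (h6 z')
    · exact singW z z' (h1' z hz) hz hne (h6 z')
    · exact sing2 z z' (h1' z hz) (h1' z' hz') hne
  -- image linearity per class
  have zlin : ∀ z, (z ∈ varsList B.inp ∨
      (z ∈ varsList c.head.out ∧ z ∉ varsList c.head.inp) ∨ z ∉ W) →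
      ∀ v, (ψ z).varCount v ≤ 1 := by
    intro z hz v
    rcases hz with hz | hz | hz
    · rw [h1 z hz]
      simp only [Trm.varCount_var]
      split <;> omega
    · exact h4 z hz.1 hz.2 v
    · rw [h1' z hz]
      simp only [Trm.varCount_var]
      split <;> omega
  -- pairwise disjointness of substituted var lists
  have pairwise_disj : ∀ (Xl Yl : List (Trm F)),
      (∀ x ∈ varsList Xl, ∀ z ∈ varsList Yl, (ψ x).vars ∩ (ψ z).vars = ∅) →
      varsList (substList ψ Xl) ∩ varsList (substList ψ Yl) = ∅ := by
    intro Xl Yl hp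
    refine disj_of_forall (fun v hv hv2 => ?_)
    obtain ⟨x, hx, hv⟩ := mem_varsList_substList.mp hv
    obtain ⟨z, hz, hv2⟩ := mem_varsList_substList.mp hv2
    exact disj_elem (hp x hx z hz) hv hv2
  -- GOAL
  refine NMQuery.of_split ?_ ?_
  · -- linearity of the resolvent's output
    rw [queryOut_map_subst]
    have houtdec : queryOut (A ++ c.body ++ C)
        = queryOut A ++ queryOut c.body ++ queryOut C := by simp
    have hzmem : ∀ z ∈ varsList (queryOut (A ++ c.body ++ C)), (z ∈ varsList B.inp ∨
        (z ∈ varsList c.head.out ∧ z ∉ varsList c.head.inp) ∨ z ∉ W) := by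
      intro z hz
      rw [houtdec] at hz
      simp only [varsList_append, Set.mem_union] at hz
      rcases hz with (hz | hz) | hz
      · exact (zclassifyA z hz).elim Or.inl (fun h => Or.inr (Or.inr h))
      · exact Or.inr (zclassifyBody z hz)
      · exact Or.inr (Or.inr (zclassifyC z hz))
    have hglin : LinearList (queryOut (A ++ c.body ++ C)) := by
      intro v
      rw [houtdec]
      simp only [varCountList_append]
      have l1 := hQl v
      simp only [varCountList_append] at l1
      have l2 := hlinB v
      by_cases hvB : varCountList v (queryOut c.body) = 0
      · omega
      · have hvc : v ∈ Clause.vars c :=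
          houtBc (mem_varsList_iff_varCountList.mpr hvB)
        have hvA : varCountList v (queryOut A) = 0 := by
          by_contra hn
          exact hCQ v hvc (houtAq (mem_varsList_iff_varCountList.mpr hn))
        have hvC : varCountList v (queryOut C) = 0 := by
          by_contra hn
          exact hCQ v hvc (houtCq (mem_varsList_iff_varCountList.mpr hn))
        omega
    exact LinearList.subst hglin (fun z hz v => zlin z (hzmem z hz) v)
      (fun z hz z' hz' hne => zpair z (hzmem z hz) z' (hzmem z' hz') hne)
  · -- the per-position disjointness conditions
    intro X a Y hs
    obtain ⟨X', a', Y', hD, hX, ha, hY⟩ := map_split hs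
    subst ha; subst hY
    have hqo : queryOut (a'.subst ψ :: Y'.map (Atom.subst ψ))
        = substList ψ (queryOut (a' :: Y')) := by
      rw [show a'.subst ψ :: Y'.map (Atom.subst ψ) = (a' :: Y').map (Atom.subst ψ) from rfl,
        queryOut_map_subst]
    rw [hqo, Atom.inp_subst]
    rcases three_way_split hD with ⟨A1, A2, hA, _, rfl⟩ | ⟨B1, B2, hB, _, rfl⟩
      | hYC
    · -- selected atom in A
      have horig := hQ.split (show A ++ B :: C = A1 ++ a' :: (A2 ++ B :: C) by
        rw [hA]; simp)
      have haq : a' ∈ A ++ B :: C := by rw [hA]; simp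
      have hxcl : ∀ x ∈ varsList a'.inp, x ∈ varsList B.inp ∨ x ∉ W := by
        intro x hx
        by_cases hxS : x ∈ varsList B.inp
        · exact Or.inl hxS
        right
        have hxq : x ∈ queryVars (A ++ B :: C) := varsList_inp_subset_queryVars haq hx
        have hxc : x ∉ Clause.vars c := hQC x hxq
        have hxT : x ∉ varsList B.out := by
          intro h
          refine disj_elem horig hx ?_
          simp only [queryOut_cons, queryOut_append, varsList_append, Set.mem_union]
          tauto
        rw [hW]
        simp only [Set.mem_union, not_or]
        exact ⟨⟨⟨hxS, hxT⟩, fun h => hxc (hS0c h)⟩, fun h => hxc (hT0c h)⟩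
      have hzcl : ∀ z ∈ varsList (queryOut (a' :: (A2 ++ c.body ++ C))),
          (z ∈ varsList B.inp ∨
            (z ∈ varsList c.head.out ∧ z ∉ varsList c.head.inp) ∨ z ∉ W) := by
        intro z hz
        simp only [queryOut_cons, queryOut_append, varsList_append, Set.mem_union] at hz
        have houtA' : varsList a'.out ⊆ varsList (queryOut A) := by
          intro w hw
          rw [hA]
          simp only [queryOut_append, queryOut_cons, varsList_append, Set.mem_union]
          tauto
        have houtA2 : varsList (queryOut A2) ⊆ varsList (queryOut A) := by
          intro w hw
          rw [hA]
          simp only [queryOut_append, queryOut_cons, varsList_append, Set.mem_union]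
          tauto
        rcases hz with hz | (hz | hz) | hz
        · exact (zclassifyA z (houtA' hz)).elim Or.inl (fun h => Or.inr (Or.inr h))
        · exact (zclassifyA z (houtA2 hz)).elim Or.inl (fun h => Or.inr (Or.inr h))
        · exact Or.inr (zclassifyBody z hz)
        · exact Or.inr (Or.inr (zclassifyC z hz))
      have hxne : ∀ x ∈ varsList a'.inp, ∀ z ∈ varsList (queryOut (a' :: (A2 ++ c.body ++ C))),
          x ≠ z := by
        intro x hx z hz
        rintro rfl
        simp only [queryOut_cons, queryOut_append, varsList_append, Set.mem_union] at hz
        have hxc : x ∉ Clause.vars c := hQC x (varsList_inp_subset_queryVars haq hx)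
        rcases hz with hz | (hz | hz) | hz
        · refine disj_elem horig hx ?_
          simp only [queryOut_cons, queryOut_append, varsList_append, Set.mem_union]
          tauto
        · refine disj_elem horig hx ?_
          simp only [queryOut_cons, queryOut_append, varsList_append, Set.mem_union]
          tauto
        · exact hxc (houtBc hz)
        · refine disj_elem horig hx ?_
          simp only [queryOut_cons, queryOut_append, varsList_append, Set.mem_union]
          tauto
      refine pairwise_disj _ _ (fun x hx z hz => ?_)
      exact zpair x ((hxcl x hx).elim Or.inl (fun h => Or.inr (Or.inr h)))
        z (hzcl z hz) (hxne x hx z hz)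
    · -- selected atom in the body
      have horig := hbodyNM.split hB
      have haB : a' ∈ c.body := by rw [hB]; simp
      have hinpc : varsList a'.inp ⊆ Clause.vars c := by
        intro x hx
        simp only [Clause.vars, Set.mem_union]
        exact Or.inr (mem_queryVars.mpr ⟨a', haB, Or.inl hx⟩)
      have hzcl : ∀ z ∈ varsList (queryOut (a' :: (B2 ++ C))),
          ((z ∈ varsList c.head.out ∧ z ∉ varsList c.head.inp) ∨ z ∉ W) := by
        intro z hz
        simp only [queryOut_cons, queryOut_append, varsList_append, Set.mem_union] at hz
        have houtB' : varsList a'.out ⊆ varsList (queryOut c.body) := by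
          intro w hw
          rw [hB]
          simp only [queryOut_append, queryOut_cons, varsList_append, Set.mem_union]
          tauto
        have houtB2 : varsList (queryOut B2) ⊆ varsList (queryOut c.body) := by
          intro w hw
          rw [hB]
          simp only [queryOut_append, queryOut_cons, varsList_append, Set.mem_union]
          tauto
        rcases hz with hz | hz | hz
        · exact zclassifyBody z (houtB' hz)
        · exact zclassifyBody z (houtB2 hz)
        · exact Or.inr (zclassifyC z hz)
      have hxne : ∀ x ∈ varsList a'.inp, ∀ z ∈ varsList (queryOut (a' :: (B2 ++ C))),
          x ≠ z := by
        intro x hx z hz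
        rintro rfl
        simp only [queryOut_cons, queryOut_append, varsList_append, Set.mem_union] at hz
        rcases hz with hz | hz | hz
        · refine disj_elem horig hx ?_
          simp only [queryOut_cons, varsList_append, Set.mem_union]
          tauto
        · refine disj_elem horig hx ?_
          simp only [queryOut_cons, varsList_append, Set.mem_union]
          tauto
        · exact hCQ x (hinpc hx) (houtCq hz)
      refine pairwise_disj _ _ (fun x hx z hz => ?_)
      by_cases hxS0 : x ∈ varsList c.head.inp
      · -- x is an input variable of the head
        refine disj_of_forall (fun v hv hv2 => ?_)
        have hvS : v ∈ varsList B.inp := h2 x hxS0 hv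
        rcases hzcl z hz with hzc | hzc
        · exact disj_elem (h5 z hzc.1 hzc.2) hv2 hvS
        · rw [h1' z hzc] at hv2
          simp only [Trm.vars_var, Set.mem_singleton_iff] at hv2
          subst hv2
          exact hzc (hSW hvS)
      · -- x is a body-local or head-output variable
        have hxq : x ∉ queryVars (A ++ B :: C) := hCQ x (hinpc hx)
        have hxcl : (x ∈ varsList c.head.out ∧ x ∉ varsList c.head.inp) ∨ x ∉ W := by
          by_cases hxT0 : x ∈ varsList c.head.out
          · exact Or.inl ⟨hxT0, hxS0⟩
          right
          rw [hW]
          simp only [Set.mem_union, not_or]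
          exact ⟨⟨⟨fun h => hxq (hSq h), fun h => hxq (hTq h)⟩, hxS0⟩, hxT0⟩
        exact zpair x (Or.inr hxcl) z (Or.inr (hzcl z hz)) (hxne x hx z hz)
    · -- selected atom in C
      obtain ⟨C1, C2, hC, hX2, hY2⟩ := hYC
      subst hY2
      have horig := hQ.split (show A ++ B :: C = (A ++ B :: C1) ++ a' :: Y' by
        rw [hC]; simp)
      have haq : a' ∈ A ++ B :: C := by rw [hC]; simp
      have hzW : ∀ z ∈ varsList (queryOut (a' :: Y')), z ∉ W := by
        intro z hz
        refine zclassifyC z ?_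
        simp only [queryOut_cons, varsList_append, Set.mem_union] at hz
        rcases hz with hz | hz
        · rw [hC]
          simp only [queryOut_append, queryOut_cons, varsList_append, Set.mem_union]
          tauto
        · rw [hC]
          simp only [queryOut_append, queryOut_cons, varsList_append, Set.mem_union]
          tauto
      refine pairwise_disj _ _ (fun x hx z hz => ?_)
      have hxzne : x ≠ z := by
        rintro rfl
        exact disj_elem horig hx hz
      have hxc : x ∉ Clause.vars c := hQC x (varsList_inp_subset_queryVars haq hx)
      by_cases hxS : x ∈ varsList B.inp
      · exact zpair x (Or.inl hxS) z (Or.inr (Or.inr (hzW z hz))) hxzne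
      by_cases hxT : x ∈ varsList B.out
      · refine disj_of_forall (fun v hv hv2 => ?_)
        rw [h1' z (hzW z hz)] at hv2
        simp only [Trm.vars_var, Set.mem_singleton_iff] at hv2
        rcases h6 x hv with h | h
        · exact hzW z hz (hv2 ▸ h)
        · simp only [Set.mem_singleton_iff] at h
          exact hxzne (h ▸ hv2)
      · have hxW : x ∉ W := by
          rw [hW]
          simp only [Set.mem_union, not_or]
          exact ⟨⟨⟨hxS, hxT⟩, fun h => hxc (hS0c h)⟩, fun h => hxc (hT0c h)⟩
        exact zpair x (Or.inr (Or.inr hxW)) z (Or.inr (Or.inr (hzW z hz))) hxzne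

end Assemble

set_option maxHeartbeats 1000000

/-- Every resolvent of a nicely-moded query `Q = A,B,C` (selected
atom `B`) and a nicely-moded clause `c`, where the derivation step is
input-consuming and `Var(Q) ∩ Var(c) = ∅`, is nicely-moded. -/
theorem stmt2 {P F : Type} (A C : Query P F) (B : Atom P F) (c : Clause P F)
    (θ : Subst F)
    (hQ : NMQuery (A ++ B :: C)) (hc : NMClause c)
    (hdisj : queryVars (A ++ B :: C) ∩ Clause.vars c = ∅)
    (hmgu : Atom.IsMgu θ B c.head)
    (hic : substList θ B.inp = B.inp) :
    NMQuery ((A ++ c.body ++ C).map (Atom.subst θ)) := by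
  classical
  have hu : B.subst θ = c.head.subst θ := hmgu.1
  have hinp : substList θ B.inp = substList θ c.head.inp := by
    have := congrArg Atom.inp hu
    simpa [Atom.subst] using this
  have hout : substList θ B.out = substList θ c.head.out := by
    have := congrArg Atom.out hu
    simpa [Atom.subst] using this
  have hrel : B.rel = c.head.rel := by
    have := congrArg Atom.rel hu
    simpa [Atom.subst] using this
  have hθS : ∀ x ∈ varsList B.inp, θ x = Trm.var x := substList_eq_self hic
  have hs0θ : substList θ c.head.inp = B.inp := hinp.symm.trans hic
  have hS0vars : ∀ x ∈ varsList c.head.inp, (θ x).vars ⊆ varsList B.inp := by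
    intro x hx v hv
    rw [← hs0θ]
    exact mem_varsList_substList.mpr ⟨x, hx, hv⟩
  have hθS0fix : ∀ x ∈ varsList c.head.inp, (θ x).subst θ = θ x := by
    intro x hx
    have : (θ x).subst θ = (θ x).subst Subst.id :=
      Trm.subst_congr (fun v hv => hθS v (hS0vars x hx hv))
    rw [this, Trm.subst_id]
  -- the matching substitution ρ1
  set ρ1 : Subst F := fun v => if v ∈ varsList c.head.inp then θ v else Trm.var v with hρ1
  have hρ1S0 : ∀ v ∈ varsList c.head.inp, ρ1 v = θ v := by
    intro v hv; rw [hρ1]; simp [hv]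
  have hρ1no : ∀ v, v ∉ varsList c.head.inp → ρ1 v = Trm.var v := by
    intro v hv; rw [hρ1]; simp [hv]
  have hρθ : ∀ v, (ρ1 v).subst θ = θ v := by
    intro v
    by_cases hv : v ∈ varsList c.head.inp
    · rw [hρ1S0 v hv]; exact hθS0fix v hv
    · rw [hρ1no v hv]; simp
  have hcompρθ : Subst.comp ρ1 θ = θ := funext (fun v => hρθ v)
  -- disjointness plumbing
  have hQC : ∀ x ∈ queryVars (A ++ B :: C), x ∉ Clause.vars c := fun x hx => disj_elem hdisj hx
  have hSq : varsList B.inp ⊆ queryVars (A ++ B :: C) := varsList_inp_subset_queryVars (by simp)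
  have hTq : varsList B.out ⊆ queryVars (A ++ B :: C) := varsList_out_subset_queryVars (by simp)
  have hS0c : varsList c.head.inp ⊆ Clause.vars c := by
    intro x hx
    simp only [Clause.vars, Atom.vars, Set.mem_union]
    tauto
  have hT0c : varsList c.head.out ⊆ Clause.vars c := by
    intro x hx
    simp only [Clause.vars, Atom.vars, Set.mem_union]
    tauto
  have hsplitB := hQ.split (rfl : A ++ B :: C = A ++ B :: C)
  have hST : ∀ x ∈ varsList B.inp, x ∉ varsList B.out := by
    intro x hx hx2
    refine disj_elem hsplitB hx ?_
    simp only [queryOut_cons, varsList_append, Set.mem_union]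
    exact Or.inl hx2
  have hlinT : LinearList B.out := by
    have h1 := hQ.1
    have : LinearList (queryOut A ++ (B.out ++ queryOut C)) := by simpa using h1
    exact LinearList.of_append_left (LinearList.of_append_right this)
  -- the residual system
  set u : List (Trm F) := substList ρ1 c.head.out with hu'
  have hu_vars : varsList u ⊆ varsList c.head.out ∪ varsList B.inp := by
    intro x hx
    rw [hu'] at hx
    obtain ⟨w, hw, hx⟩ := mem_varsList_substList.mp hx
    by_cases hws : w ∈ varsList c.head.inp
    · rw [hρ1S0 w hws] at hx
      exact Or.inr (hS0vars w hws hx)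
    · rw [hρ1no w hws] at hx
      simp only [Trm.vars_var, Set.mem_singleton_iff] at hx
      subst hx
      exact Or.inl hw
  have hlent : B.out.length = u.length := by
    have h1 : (substList θ B.out).length = (substList θ c.head.out).length :=
      congrArg List.length hout
    simp only [substList, List.length_map] at h1
    rw [hu']
    simp only [substList, List.length_map]
    exact h1
  set l : List (Trm F × Trm F) := B.out.zip u with hl
  have hlfst : l.map Prod.fst = B.out := by
    rw [hl]; exact List.map_fst_zip (le_of_eq hlent)
  have hlsnd : l.map Prod.snd = u := by
    rw [hl]; exact List.map_snd_zip (ge_of_eq hlent)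
  have hθu : substList θ u = substList θ c.head.out := by
    rw [hu', ← substList_comp, hcompρθ]
  have hInv : SolveInv θ l := by
    refine ⟨?_, ?_, ?_⟩
    · rw [hlfst]; exact hlinT
    · rw [hlfst, hlsnd]
      refine disj_of_forall (fun x hx hx2 => ?_)
      rcases hu_vars hx2 with h | h
      · exact hQC x (hTq hx) (hT0c h)
      · exact hST x h hx
    · intro p hp
      refine map_eq_map_zip ?_ p hp
      show substList θ B.out = substList θ u
      rw [hθu]
      exact hout
  set σ2 : Subst F := solve l with hσ2
  set ψ : Subst F := Subst.comp ρ1 σ2 with hψ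
  -- evaluation of ψ
  have hfix2 : ∀ x ∈ varsList B.inp, σ2 x = Trm.var x := by
    intro x hx
    refine solve_fixes l hInv x (hθS x hx) ?_
    rw [hlfst]
    exact hST x hx
  have hSS0 : ∀ x ∈ varsList B.inp, x ∉ varsList c.head.inp :=
    fun x hx h => hQC x (hSq hx) (hS0c h)
  have e_notS0 : ∀ v, v ∉ varsList c.head.inp → ψ v = σ2 v := by
    intro v hv
    rw [hψ]
    show (ρ1 v).subst σ2 = σ2 v
    rw [hρ1no v hv]
    simp
  have e_S0 : ∀ v ∈ varsList c.head.inp, ψ v = θ v := by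
    intro v hv
    rw [hψ]
    show (ρ1 v).subst σ2 = θ v
    rw [hρ1S0 v hv]
    have : (θ v).subst σ2 = (θ v).subst Subst.id :=
      Trm.subst_congr (fun x hx => hfix2 x (hS0vars v hv hx))
    rw [this, Trm.subst_id]
  have hT0mem : ∀ z ∈ varsList c.head.out, z ∉ varsList c.head.inp →
      z ∈ varsList (l.map Prod.snd) := by
    intro z hz hz0
    rw [hlsnd, hu']
    exact mem_varsList_substList.mpr ⟨z, hz, by rw [hρ1no z hz0]; simp⟩
  obtain ⟨hlin1, hlin2⟩ := solve_linear l hInv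
  -- the structural hypotheses of nm_assemble
  have H1 : ∀ x ∈ varsList B.inp, ψ x = Trm.var x := by
    intro x hx
    rw [e_notS0 x (hSS0 x hx)]
    exact hfix2 x hx
  have H1' : ∀ x, x ∉ (varsList B.inp ∪ varsList B.out ∪ varsList c.head.inp ∪
      varsList c.head.out) → ψ x = Trm.var x := by
    intro x hx
    simp only [Set.mem_union, not_or] at hx
    rw [e_notS0 x hx.1.2]
    refine solve_outside l x ?_ ?_
    · rw [hlfst]; exact hx.1.1.2
    · rw [hlsnd]
      intro h
      rcases hu_vars h with h | h
      · exact hx.2 h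
      · exact hx.1.1.1 h
  have H2 : ∀ x ∈ varsList c.head.inp, (ψ x).vars ⊆ varsList B.inp := by
    intro x hx
    rw [e_S0 x hx]
    exact hS0vars x hx
  have H3 : ∀ z ∈ varsList c.head.out, z ∉ varsList c.head.inp →
      ∀ z' ∈ varsList c.head.out, z' ∉ varsList c.head.inp → z ≠ z' →
      (ψ z).vars ∩ (ψ z').vars = ∅ := by
    intro z hz hz0 z' hz' hz0' hne
    rw [e_notS0 z hz0, e_notS0 z' hz0']
    exact hlin2 z (hT0mem z hz hz0) z' (hT0mem z' hz' hz0') hne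
  have H4 : ∀ z ∈ varsList c.head.out, z ∉ varsList c.head.inp →
      ∀ v, (ψ z).varCount v ≤ 1 := by
    intro z hz hz0 v
    rw [e_notS0 z hz0]
    exact hlin1 z (hT0mem z hz hz0) v
  have H5 : ∀ z ∈ varsList c.head.out, z ∉ varsList c.head.inp →
      (ψ z).vars ∩ varsList B.inp = ∅ := by
    intro z hz hz0
    rw [e_notS0 z hz0]
    refine disj_of_forall (fun x hx hxS => ?_)
    by_cases hxu : x ∈ varsList (l.map Prod.snd)
    · have hxz : x ≠ z := fun h => hQC x (hSq hxS) (hT0c (h ▸ hz))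
      have h9 := hlin2 x hxu z (hT0mem z hz hz0) hxz
      have hxx : x ∈ (σ2 x).vars := by
        rw [hfix2 x hxS]
        simp
      exact disj_elem h9 hxx hx
    · have := solve_vars_subset l z hx
      simp only [Set.mem_union, Set.mem_singleton_iff] at this
      rcases this with ((h | h) | h)
      · rw [hlfst] at h
        exact hST x hxS h
      · exact hxu h
      · exact hQC x (hSq hxS) (hT0c (h ▸ hz))
  have H6 : ∀ v, (ψ v).vars ⊆ (varsList B.inp ∪ varsList B.out ∪ varsList c.head.inp ∪
      varsList c.head.out) ∪ {v} := by
    intro v x hx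
    by_cases hv : v ∈ varsList c.head.inp
    · rw [e_S0 v hv] at hx
      simp only [Set.mem_union]
      exact Or.inl (Or.inl (Or.inl (Or.inl (hS0vars v hv hx))))
    · rw [e_notS0 v hv] at hx
      have := solve_vars_subset l v hx
      simp only [Set.mem_union, Set.mem_singleton_iff] at this ⊢
      rcases this with ((h | h) | h)
      · rw [hlfst] at h; tauto
      · rw [hlsnd] at h
        rcases hu_vars h with h | h <;> tauto
      · tauto
  have NM1 : NMQuery ((A ++ c.body ++ C).map (Atom.subst ψ)) :=
    nm_assemble A C B c ψ hQ hc hdisj H1 H1' H2 H3 H4 H5 H6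
  -- ψ is a unifier, and cancels against every unifier
  have hψs : substList ψ B.inp = B.inp := by
    rw [hψ, substList_comp]
    have e1 : substList ρ1 B.inp = B.inp := by
      rw [show substList ρ1 B.inp = substList Subst.id B.inp from
        substList_congr (fun x hx => hρ1no x (hSS0 x hx)), substList_id]
    rw [e1]
    rw [show substList σ2 B.inp = substList Subst.id B.inp from
      substList_congr (fun x hx => hfix2 x hx), substList_id]
  have hψunif : Atom.IsUnifier ψ B c.head := by
    show B.subst ψ = c.head.subst ψ
    have hinp' : substList ψ B.inp = substList ψ c.head.inp := by
      rw [hψs]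
      rw [hψ, substList_comp]
      have : substList ρ1 c.head.inp = substList θ c.head.inp :=
        substList_congr (fun x hx => hρ1S0 x hx)
      rw [this, hs0θ]
      rw [show substList σ2 B.inp = substList Subst.id B.inp from
        substList_congr (fun x hx => hfix2 x hx), substList_id]
    have hout' : substList ψ B.out = substList ψ c.head.out := by
      rw [hψ, substList_comp, substList_comp]
      have e1 : substList ρ1 B.out = B.out := by
        rw [show substList ρ1 B.out = substList Subst.id B.out from
          substList_congr (fun x hx => hρ1no x (fun h => hQC x (hTq hx) (hS0c h))),
          substList_id]
      rw [e1]
      have e2 : substList ρ1 c.head.out = u := rfl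
      rw [e2]
      exact zip_forall_map_eq hlent (fun p hp => solve_unifies l hInv p hp)
    show Atom.mk B.rel (substList ψ B.inp) (substList ψ B.out)
      = Atom.mk c.head.rel (substList ψ c.head.inp) (substList ψ c.head.out)
    rw [hrel, hinp', hout']
  -- ψ cancels against every unifier
  have hcanc : ∀ σ : Subst F, B.subst σ = c.head.subst σ → ∀ v, (ψ v).subst σ = σ v := by
    intro σ hσ v
    have hσinp : substList σ B.inp = substList σ c.head.inp := by
      have := congrArg Atom.inp hσ
      simpa [Atom.subst] using this
    have hσout : substList σ B.out = substList σ c.head.out := by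
      have := congrArg Atom.out hσ
      simpa [Atom.subst] using this
    have pointS0 : ∀ z ∈ varsList c.head.inp, (θ z).subst σ = σ z := by
      refine pointwise_of_substList ?_
      rw [hs0θ, hσinp]
    have hρσ : ∀ w, (ρ1 w).subst σ = σ w := by
      intro w
      by_cases hw : w ∈ varsList c.head.inp
      · rw [hρ1S0 w hw]; exact pointS0 w hw
      · rw [hρ1no w hw]; simp
    have hσu : substList σ u = substList σ B.out := by
      rw [hu', ← substList_comp,
        show Subst.comp ρ1 σ = σ from funext hρσ]
      exact hσout.symm
    have hσpairs : ∀ p ∈ l, p.1.subst σ = p.2.subst σ := by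
      refine map_eq_map_zip ?_
      show substList σ B.out = substList σ u
      exact hσu.symm
    have hgen := solve_general l σ hσpairs
    rw [hψ]
    show ((ρ1 v).subst σ2).subst σ = σ v
    rw [subst_cancel hgen]
    exact hρσ v
  -- ψ is an mgu, hence θ factors through it and vice versa
  have hψmgu : Atom.IsMgu ψ B c.head := by
    refine ⟨hψunif, fun σ hσ => ⟨σ, funext (fun v => ?_)⟩⟩
    exact hcanc σ hσ v
  have hfactθ : ∀ v, (ψ v).subst θ = θ v := hcanc θ hu
  obtain ⟨γ, hγ⟩ := hmgu.2 ψ hψunif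
  -- θ is an injective variable renaming on the variables of the ψ-image
  set U : Set ℕ := {y | ∃ x, y ∈ (ψ x).vars} with hU
  have hUfix : ∀ y ∈ U, (θ y).subst γ = Trm.var y := by
    rintro y ⟨x, hyx⟩
    have h1 : (ψ x).subst (Subst.comp θ γ) = ψ x := by
      rw [← Trm.subst_subst, hfactθ]
      have := congrFun hγ x
      exact this
    have := Trm.subst_eq_self h1 y hyx
    rw [Subst.comp] at this
    exact this
  have hUvar : ∀ y ∈ U, ∃ w, θ y = Trm.var w := by
    intro y hy
    have h1 := hUfix y hy
    cases hθy : θ y with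
    | var w => exact ⟨w, rfl⟩
    | fn f ts =>
      rw [hθy] at h1
      simp only [Trm.subst_fn] at h1
      exact absurd h1 (by intro h; cases h)
  have hUinj : ∀ y1 ∈ U, ∀ y2 ∈ U, θ y1 = θ y2 → y1 = y2 := by
    intro y1 hy1 y2 hy2 he
    have h1 := hUfix y1 hy1
    have h2 := hUfix y2 hy2
    rw [he] at h1
    rw [h1] at h2
    injection h2
  -- transport nicely-modedness along θ
  have hsubU : queryVars (((A ++ c.body ++ C).map (Atom.subst ψ))) ⊆ U := by
    intro x hx
    obtain ⟨a, ha, hxa⟩ := mem_queryVars.mp hx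
    obtain ⟨a', _, rfl⟩ := List.mem_map.mp ha
    rcases hxa with hxa | hxa
    · rw [Atom.inp_subst] at hxa
      obtain ⟨w, _, hw⟩ := mem_varsList_substList.mp hxa
      exact ⟨w, hw⟩
    · rw [Atom.out_subst] at hxa
      obtain ⟨w, _, hw⟩ := mem_varsList_substList.mp hxa
      exact ⟨w, hw⟩
  have NM2 := NMQuery.subst_varmap NM1 hsubU hUvar hUinj
  have hcompθ : Subst.comp ψ θ = θ := funext hfactθ
  have hmaps : (A ++ c.body ++ C).map (Atom.subst θ)
      = ((A ++ c.body ++ C).map (Atom.subst ψ)).map (Atom.subst θ) := by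
    rw [List.map_map]
    refine List.map_congr_left (fun a _ => ?_)
    show a.subst θ = (a.subst ψ).subst θ
    show Atom.mk a.rel (substList θ a.inp) (substList θ a.out)
      = Atom.mk a.rel (substList θ (substList ψ a.inp)) (substList θ (substList ψ a.out))
    rw [← substList_comp, ← substList_comp, hcompθ]
  rw [hmaps]
  exact NM2
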